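/- arXiv:1811.01436 — 7 statements merged into one kernel-verified Lean document; each statement's English description precedes it below -/
import Mathlib

section
/- Let η be a nonzero ±1-valued event sequence on [0,T]. Then r := ‖η‖_D is a positive integer and there exist ±1-valued event sequences η_0, η_1, …, η_r on [0,T] with η_0 identically zero, η_r = η, ‖η_k − η_{k−1}‖_D = 1 for every k ∈ {1, …, r}, and consequently ‖η‖_D = Σ_{k=1}^{r} ‖η_k − η_{k−1}‖_D. -/
open Set Function Filter Classical

/-!
Let `S` be the partial-sum path of `η`, with `S t⁻` its value just before `t`. Then the sum of
`η` over `[a, b]` is `S b - S a⁻`, so `‖η‖_D = M - m` for the extreme values `m ≤ 0 ≤ M`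
of the path. Clamping `S` to `[m, m + k]` is 1-Lipschitz, so its jumps `η_k` form again a
`±1`-valued event sequence, with `η_0 = 0` and `η_{M-m} = η`. Up to a constant, the
partial-sum path of `η_k - η_{k-1}` is `1[S ≥ m + k]`, which takes both values `0` and `1`;
hence its discrepancy norm is `1`.
-/

/-- The next SOD sampling time after time `s` for input `f`, threshold `θ`, on `[0,T]`:
the infimum of `{t ∈ (s,T] : |f t - f s| ≥ θ}` if this set is nonempty, `none` otherwise. -/
noncomputable def sodNext (T θ : ℝ) (f : ℝ → ℝ) (s : ℝ) : Option ℝ :=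
  if (∃ t ∈ Set.Ioc s T, θ ≤ |f t - f s|) then
    some (sInf {t | t ∈ Set.Ioc s T ∧ θ ≤ |f t - f s|})
  else none

/-- The `k`-th SOD sampling time (`t_0 = 0`), `none` if the recursion has stopped before `k`. -/
noncomputable def sodTime (T θ : ℝ) (f : ℝ → ℝ) : ℕ → Option ℝ
  | 0 => some 0
  | n + 1 => (sodTime T θ f n).bind (sodNext T θ f)

/-- The SOD output event sequence `Φ_θ(f)` : it takes the value `f t_k - f t_{k-1}` at
each sampling time `t_k`, `k ≥ 1`, and `0` elsewhere. -/
noncomputable def sodOut (T θ : ℝ) (f : ℝ → ℝ) : ℝ → ℝ := fun t =>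
  if h : ∃ k : ℕ, ∃ s : ℝ, sodTime T θ f k = some s ∧ sodNext T θ f s = some t
  then f t - f h.choose_spec.choose
  else 0

/-- Membership in `F[0,T]`: continuous on `[0,T]` with `f 0 = 0`. -/
def memF (T : ℝ) (f : ℝ → ℝ) : Prop :=
  ContinuousOn f (Set.Icc 0 T) ∧ f 0 = 0

/-- An event sequence on `[0,T]`: finitely supported with support in `[0,T]`. -/
def IsEventSeq (T : ℝ) (η : ℝ → ℝ) : Prop :=
  (Function.support η).Finite ∧ Function.support η ⊆ Set.Icc 0 T

/-- `η` is `±1`-valued on its support. -/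
def IsPM (η : ℝ → ℝ) : Prop :=
  ∀ t ∈ Function.support η, η t = 1 ∨ η t = -1

/-- Weyl's discrepancy norm `‖η‖_D = sup_{0 ≤ a ≤ b ≤ T} |Σ_{t ∈ [a,b]} η t|`. -/
noncomputable def discNorm (T : ℝ) (η : ℝ → ℝ) : ℝ :=
  sSup {x | ∃ a b : ℝ, 0 ≤ a ∧ a ≤ b ∧ b ≤ T ∧ x = |∑ᶠ t ∈ Set.Icc a b, η t|}

/-- Alexiewicz norm `‖η‖_A = sup_{a ∈ [0,T]} |Σ_{t ∈ [0,a]} η t|`. -/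
noncomputable def alexNorm (T : ℝ) (η : ℝ → ℝ) : ℝ :=
  sSup {x | ∃ a : ℝ, 0 ≤ a ∧ a ≤ T ∧ x = |∑ᶠ t ∈ Set.Icc 0 a, η t|}

/-- The values of `η` at consecutive support points alternate in sign. -/
def Alternating (η : ℝ → ℝ) : Prop :=
  ∀ s u : ℝ, s ∈ Function.support η → u ∈ Function.support η → s < u →
    (∀ t ∈ Function.support η, ¬ (s < t ∧ t < u)) → η s * η u < 0

/-- One `(+−)`-transcription step: erase a `+1` followed (with no support in between) by a `−1`. -/
def StepPM (η η' : ℝ → ℝ) : Prop :=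
  ∃ s u : ℝ, s < u ∧ η s = 1 ∧ η u = -1 ∧ (∀ t : ℝ, s < t → t < u → η t = 0) ∧
    η' = Function.update (Function.update η s 0) u 0

/-- One `(−+)`-transcription step: erase a `−1` followed (with no support in between) by a `+1`. -/
def StepMP (η η' : ℝ → ℝ) : Prop :=
  ∃ s u : ℝ, s < u ∧ η s = -1 ∧ η u = 1 ∧ (∀ t : ℝ, s < t → t < u → η t = 0) ∧
    η' = Function.update (Function.update η s 0) u 0

/-- `StepsN R n x y` : `y` is obtained from `x` by `n` successive `R`-steps. -/
def StepsN (R : (ℝ → ℝ) → (ℝ → ℝ) → Prop) : ℕ → (ℝ → ℝ) → (ℝ → ℝ) → Prop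
  | 0, x, y => x = y
  | n + 1, x, z => ∃ y, R x y ∧ StepsN R n y z

/-- Uniform distance `‖f − g‖_∞` over `[0,T]`. -/
noncomputable def unifDist (T : ℝ) (f g : ℝ → ℝ) : ℝ :=
  sSup {x | ∃ t ∈ Set.Icc 0 T, x = |f t - g t|}

namespace Finset

variable {α : Type*} [LinearOrder α] {s u : Finset α}

def IsInitialSegment (s u : Finset α) : Prop :=
  u ⊆ s ∧ ∀ x ∈ u, ∀ y ∈ s, y ≤ x → y ∈ u

theorem isInitialSegment_filter_le (b : α) : IsInitialSegment s (s.filter (· ≤ b)) :=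
  ⟨filter_subset _ s, fun _ hx _ hy hyx =>
    mem_filter.mpr ⟨hy, hyx.trans (mem_filter.mp hx).2⟩⟩

theorem isInitialSegment_filter_lt (a : α) : IsInitialSegment s (s.filter (· < a)) :=
  ⟨filter_subset _ s, fun _ hx _ hy hyx =>
    mem_filter.mpr ⟨hy, hyx.trans_lt (mem_filter.mp hx).2⟩⟩

theorem IsInitialSegment.filter_le_max'_eq (hu : IsInitialSegment s u) (hne : u.Nonempty) :
    s.filter (· ≤ u.max' hne) = u := by
  ext y
  simp only [mem_filter]
  exact ⟨fun ⟨hy, hle⟩ => hu.2 _ (u.max'_mem hne) y hy hle,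
    fun hy => ⟨hu.1 hy, u.le_max' y hy⟩⟩

theorem IsInitialSegment.sum_sub_eq {β : Type*} [AddCommGroup β] (H : Finset α → β)
    (hu : IsInitialSegment s u) :
    ∑ t ∈ u, (H (s.filter (· ≤ t)) - H (s.filter (· < t))) = H u - H ∅ := by
  induction u using Finset.induction_on_max with
  | empty => simp
  | insert a u hlt ih =>
    obtain ⟨hus, hlow⟩ := hu
    have hau : a ∉ u := fun h => lt_irrefl a (hlt a h)
    have hlow' : ∀ x ∈ u, ∀ y ∈ s, y ≤ x → y ∈ u := fun x hx y hy hyx =>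
      (mem_insert.mp (hlow x (mem_insert_of_mem hx) y hy hyx)).resolve_left
        (ne_of_lt (hyx.trans_lt (hlt x hx)))
    have hle : s.filter (· ≤ a) = insert a u := by
      ext y
      simp only [mem_filter, mem_insert]
      refine ⟨fun ⟨hy, hya⟩ => mem_insert.mp (hlow a (mem_insert_self a u) y hy hya), ?_⟩
      rintro (rfl | hy)
      · exact ⟨hus (mem_insert_self y u), le_rfl⟩
      · exact ⟨hus (mem_insert_of_mem hy), (hlt y hy).le⟩
    have hlt' : s.filter (· < a) = u := by
      ext y
      simp only [mem_filter]
      refine ⟨fun ⟨hy, hya⟩ => ?_, fun hy => ⟨hus (mem_insert_of_mem hy), hlt y hy⟩⟩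
      exact (mem_insert.mp (hlow a (mem_insert_self a u) y hy hya.le)).resolve_left hya.ne
    rw [sum_insert hau, ih ⟨(subset_insert a u).trans hus, hlow'⟩, hle, hlt']
    abel

theorem sum_filter_Icc_sub_eq {β : Type*} [AddCommGroup β] (H : Finset α → β) {a b : α}
    (hab : a ≤ b) :
    ∑ t ∈ s with t ∈ Set.Icc a b, (H (s.filter (· ≤ t)) - H (s.filter (· < t))) =
      H (s.filter (· ≤ b)) - H (s.filter (· < a)) := by
  have hsplit : s.filter (· ≤ b) = s.filter (· < a) ∪ s.filter (· ∈ Set.Icc a b) := by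
    ext y
    simp only [mem_union, mem_filter, Set.mem_Icc]
    constructor
    · rintro ⟨hy, hyb⟩
      rcases lt_or_ge y a with hya | hya
      exacts [Or.inl ⟨hy, hya⟩, Or.inr ⟨hy, hya, hyb⟩]
    · rintro (⟨hy, hya⟩ | ⟨hy, -, hyb⟩)
      exacts [⟨hy, hya.le.trans hab⟩, ⟨hy, hyb⟩]
  have hdisj : Disjoint (s.filter (· < a)) (s.filter (· ∈ Set.Icc a b)) :=
    disjoint_filter.mpr fun y _ hya hy => (not_le.mpr hya) hy.1
  have hb := (isInitialSegment_filter_le (s := s) b).sum_sub_eq H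
  rw [hsplit, sum_union hdisj, ← hsplit,
    (isInitialSegment_filter_lt (s := s) a).sum_sub_eq H] at hb
  rw [eq_sub_of_add_eq' hb]
  abel

end Finset

theorem discNorm_eq_of_forall_le {T d : ℝ} {f : ℝ → ℝ}
    (hle : ∀ a b, 0 ≤ a → a ≤ b → b ≤ T → |∑ᶠ t ∈ Icc a b, f t| ≤ d)
    (hex : ∃ a b, 0 ≤ a ∧ a ≤ b ∧ b ≤ T ∧ |∑ᶠ t ∈ Icc a b, f t| = d) :
    discNorm T f = d := by
  obtain ⟨a, b, ha, hab, hb, hd⟩ := hex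
  refine IsGreatest.csSup_eq ⟨⟨a, b, ha, hab, hb, hd.symm⟩, ?_⟩
  rintro _ ⟨a, b, ha, hab, hb, rfl⟩
  exact hle a b ha hab hb

namespace EventSeq

variable {s : Finset ℝ} {ζ : ℝ → ℤ}

noncomputable def partialSum (s : Finset ℝ) (ζ : ℝ → ℤ) (x : ℝ) : ℤ :=
  ∑ t ∈ s with t ≤ x, ζ t

noncomputable def partialSumLT (s : Finset ℝ) (ζ : ℝ → ℤ) (x : ℝ) : ℤ :=
  ∑ t ∈ s with t < x, ζ t

/-- The event sequence whose partial-sum path is `G ∘ partialSum s ζ`, up to a constant. -/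
noncomputable def jumpSeq (s : Finset ℝ) (ζ : ℝ → ℤ) (G : ℤ → ℤ) (t : ℝ) : ℝ :=
  (G (partialSum s ζ t) - G (partialSumLT s ζ t) : ℤ)

theorem partialSum_eq_add {t : ℝ} (ht : t ∈ s) :
    partialSum s ζ t = partialSumLT s ζ t + ζ t := by
  have : s.filter (· ≤ t) = insert t (s.filter (· < t)) := by
    ext y
    simp only [Finset.mem_filter, Finset.mem_insert]
    constructor
    · rintro ⟨hy, hyt⟩
      exact hyt.eq_or_lt.imp_right (⟨hy, ·⟩)
    · rintro (rfl | ⟨hy, hyt⟩)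
      exacts [⟨ht, le_rfl⟩, ⟨hy, hyt.le⟩]
  rw [partialSum, partialSumLT, this, Finset.sum_insert (by simp), add_comm]

theorem partialSum_eq_of_notMem {t : ℝ} (ht : t ∉ s) :
    partialSum s ζ t = partialSumLT s ζ t := by
  refine Finset.sum_congr (Finset.filter_congr fun y hy => ?_) fun _ _ => rfl
  exact ⟨fun h => h.lt_of_ne (ne_of_mem_of_not_mem hy ht), le_of_lt⟩

theorem jumpSeq_eq_zero_of_notMem (G : ℤ → ℤ) {t : ℝ} (ht : t ∉ s) :
    jumpSeq s ζ G t = 0 := by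
  simp [jumpSeq, partialSum_eq_of_notMem ht]

theorem support_jumpSeq_subset (G : ℤ → ℤ) : support (jumpSeq s ζ G) ⊆ s :=
  fun _ ht => by_contra fun hts => ht (jumpSeq_eq_zero_of_notMem G hts)

theorem jumpSeq_id (hζ : ∀ t ∉ s, ζ t = 0) : jumpSeq s ζ id = fun t => (ζ t : ℝ) := by
  funext t
  by_cases ht : t ∈ s
  · simp [jumpSeq, partialSum_eq_add ht]
  · rw [jumpSeq_eq_zero_of_notMem id ht, hζ t ht, Int.cast_zero]

theorem jumpSeq_sub (G₁ G₂ : ℤ → ℤ) :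
    jumpSeq s ζ (G₁ - G₂) = jumpSeq s ζ G₁ - jumpSeq s ζ G₂ := by
  funext t
  simp only [jumpSeq, Pi.sub_apply]
  push_cast
  ring

theorem finsum_Icc_jumpSeq (G : ℤ → ℤ) {a b : ℝ} (hab : a ≤ b) :
    ∑ᶠ t ∈ Icc a b, jumpSeq s ζ G t =
      (G (partialSum s ζ b) - G (partialSumLT s ζ a) : ℤ) := by
  rw [finsum_mem_eq_sum_of_subset (t := s.filter (· ∈ Icc a b))]
  · simp only [jumpSeq, partialSum, partialSumLT, ← Int.cast_sum]
    rw [Finset.sum_filter_Icc_sub_eq (fun u => G (∑ t ∈ u, ζ t)) hab]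
  · exact fun t ⟨htab, ht⟩ => Finset.mem_filter.mpr ⟨support_jumpSeq_subset G ht, htab⟩
  · exact fun t ht => (Finset.mem_filter.mp ht).2

theorem isPM_jumpSeq (hζ : ∀ t, |ζ t| ≤ 1) {G : ℤ → ℤ}
    (hG : ∀ x y, |x - y| ≤ 1 → |G x - G y| ≤ 1) : IsPM (jumpSeq s ζ G) := by
  intro t ht
  have hjump : |partialSum s ζ t - partialSumLT s ζ t| ≤ 1 := by
    by_cases hts : t ∈ s
    · simpa [partialSum_eq_add hts] using hζ t
    · simp [partialSum_eq_of_notMem hts]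
  have hne : G (partialSum s ζ t) - G (partialSumLT s ζ t) ≠ 0 := fun h =>
    ht (by simp [jumpSeq, h])
  have := abs_le.mp (hG _ _ hjump)
  simp only [jumpSeq]
  rcases (by omega : G (partialSum s ζ t) - G (partialSumLT s ζ t) = 1 ∨
      G (partialSum s ζ t) - G (partialSumLT s ζ t) = -1) with h | h <;> simp [h]

noncomputable def levels (s : Finset ℝ) (ζ : ℝ → ℤ) : Finset ℤ :=
  insert 0 (s.image (partialSum s ζ))

theorem levels_nonempty (s : Finset ℝ) (ζ : ℝ → ℤ) : (levels s ζ).Nonempty :=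
  Finset.insert_nonempty _ _

theorem sum_mem_levels {u : Finset ℝ} (hu : Finset.IsInitialSegment s u) :
    ∑ t ∈ u, ζ t ∈ levels s ζ := by
  rcases u.eq_empty_or_nonempty with rfl | hne
  · simp [levels]
  · rw [← hu.filter_le_max'_eq hne]
    exact Finset.mem_insert_of_mem (Finset.mem_image_of_mem _ (hu.1 (u.max'_mem hne)))

theorem partialSum_mem_levels (x : ℝ) : partialSum s ζ x ∈ levels s ζ :=
  sum_mem_levels (Finset.isInitialSegment_filter_le x)

theorem partialSumLT_mem_levels (x : ℝ) : partialSumLT s ζ x ∈ levels s ζ :=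
  sum_mem_levels (Finset.isInitialSegment_filter_lt x)

theorem partialSumLT_zero_of_nonneg (hs : ∀ t ∈ s, 0 ≤ t) : partialSumLT s ζ 0 = 0 :=
  Finset.sum_eq_zero fun t ht =>
    absurd (Finset.mem_filter.mp ht).2 (not_lt.mpr (hs t (Finset.mem_filter.mp ht).1))

theorem exists_partialSumLT_eq {p q : ℝ} (hq : q ∈ s) (hpq : p < q) :
    ∃ a ∈ s, p < a ∧ a ≤ q ∧ partialSumLT s ζ a = partialSum s ζ p := by
  have hne : (s.filter (p < ·)).Nonempty := ⟨q, Finset.mem_filter.mpr ⟨hq, hpq⟩⟩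
  obtain ⟨has, hpa⟩ := Finset.mem_filter.mp ((s.filter (p < ·)).min'_mem hne)
  refine ⟨_, has, hpa, Finset.min'_le _ q (Finset.mem_filter.mpr ⟨hq, hpq⟩), ?_⟩
  refine Finset.sum_congr (Finset.filter_congr fun y hy =>
    ⟨fun hya => ?_, fun hyp => hyp.trans_lt hpa⟩) fun _ _ => rfl
  by_contra hyp
  exact not_lt.mpr (Finset.min'_le _ y (Finset.mem_filter.mpr ⟨hy, not_le.mp hyp⟩)) hya

theorem exists_Icc_of_mem_levels {T : ℝ} (hs : ∀ t ∈ s, t ∈ Icc 0 T) {x y : ℤ}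
    (hx : x ∈ levels s ζ) (hy : y ∈ levels s ζ) (hxy : x ≠ y) :
    ∃ a b, 0 ≤ a ∧ a ≤ b ∧ b ≤ T ∧
      (partialSumLT s ζ a = x ∧ partialSum s ζ b = y ∨
        partialSumLT s ζ a = y ∧ partialSum s ζ b = x) := by
  have h0 := partialSumLT_zero_of_nonneg (ζ := ζ) fun t ht => (hs t ht).1
  simp only [levels, Finset.mem_insert, Finset.mem_image] at hx hy
  rcases hx with rfl | ⟨p, hp, rfl⟩ <;> rcases hy with rfl | ⟨q, hq, rfl⟩
  · exact absurd rfl hxy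
  · exact ⟨0, q, le_rfl, (hs q hq).1, (hs q hq).2, Or.inl ⟨h0, rfl⟩⟩
  · exact ⟨0, p, le_rfl, (hs p hp).1, (hs p hp).2, Or.inr ⟨h0, rfl⟩⟩
  · rcases lt_or_gt_of_ne (ne_of_apply_ne _ hxy) with hpq | hqp
    · obtain ⟨a, ha, -, haq, hpa⟩ := exists_partialSumLT_eq (ζ := ζ) hq hpq
      exact ⟨a, q, (hs a ha).1, haq, (hs q hq).2, Or.inl ⟨hpa, rfl⟩⟩
    · obtain ⟨a, ha, -, hap, hqa⟩ := exists_partialSumLT_eq (ζ := ζ) hp hqp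
      exact ⟨a, p, (hs a ha).1, hap, (hs p hp).2, Or.inr ⟨hqa, rfl⟩⟩

theorem discNorm_jumpSeq {T : ℝ} (hs : ∀ t ∈ s, t ∈ Icc 0 T) (G : ℤ → ℤ) (d : ℤ)
    (hle : ∀ x ∈ levels s ζ, ∀ y ∈ levels s ζ, G x - G y ≤ d)
    (hex : ∃ x ∈ levels s ζ, ∃ y ∈ levels s ζ, x ≠ y ∧ G x - G y = d) :
    discNorm T (jumpSeq s ζ G) = d := by
  obtain ⟨x, hx, y, hy, hxy, hd⟩ := hex
  have hd0 : 0 ≤ d := by have := hle _ hy _ hx; omega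
  refine discNorm_eq_of_forall_le (fun a b _ hab _ => ?_) ?_
  · rw [finsum_Icc_jumpSeq G hab, ← Int.cast_abs, Int.cast_le, abs_le]
    have := hle _ (partialSum_mem_levels b) _ (partialSumLT_mem_levels a)
    have := hle _ (partialSumLT_mem_levels a) _ (partialSum_mem_levels b)
    constructor <;> omega
  · obtain ⟨a, b, ha, hab, hb, hab'⟩ := exists_Icc_of_mem_levels hs hx hy hxy
    refine ⟨a, b, ha, hab, hb, ?_⟩
    rw [finsum_Icc_jumpSeq G hab, ← Int.cast_abs, Int.cast_inj]
    rcases hab' with ⟨rfl, rfl⟩ | ⟨rfl, rfl⟩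
    · rw [abs_sub_comm, hd, abs_of_nonneg hd0]
    · rw [hd, abs_of_nonneg hd0]

noncomputable def minLevel (s : Finset ℝ) (ζ : ℝ → ℤ) : ℤ :=
  (levels s ζ).min' (levels_nonempty s ζ)

noncomputable def maxLevel (s : Finset ℝ) (ζ : ℝ → ℤ) : ℤ :=
  (levels s ζ).max' (levels_nonempty s ζ)

noncomputable def clampChain (s : Finset ℝ) (ζ : ℝ → ℤ) (k : ℕ) : ℝ → ℝ :=
  jumpSeq s ζ fun x => max (minLevel s ζ) (min x (minLevel s ζ + k))

theorem minLevel_le_and_le_maxLevel {x : ℤ} (hx : x ∈ levels s ζ) :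
    minLevel s ζ ≤ x ∧ x ≤ maxLevel s ζ :=
  ⟨Finset.min'_le _ x hx, Finset.le_max' _ x hx⟩

theorem minLevel_mem : minLevel s ζ ∈ levels s ζ := Finset.min'_mem _ _

theorem maxLevel_mem : maxLevel s ζ ∈ levels s ζ := Finset.max'_mem _ _

theorem minLevel_lt_maxLevel {t : ℝ} (ht : t ∈ s) (hζt : ζ t ≠ 0) :
    minLevel s ζ < maxLevel s ζ := by
  have h := partialSum_eq_add (ζ := ζ) ht
  have := minLevel_le_and_le_maxLevel (partialSum_mem_levels (s := s) (ζ := ζ) t)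
  have := minLevel_le_and_le_maxLevel (partialSumLT_mem_levels (s := s) (ζ := ζ) t)
  omega

theorem discNorm_jumpSeq_id {T : ℝ} (hs : ∀ t ∈ s, t ∈ Icc 0 T)
    (hlt : minLevel s ζ < maxLevel s ζ) :
    discNorm T (jumpSeq s ζ id) = (maxLevel s ζ - minLevel s ζ : ℤ) :=
  discNorm_jumpSeq hs id _
    (fun x hx y hy => by
      have := minLevel_le_and_le_maxLevel hx
      have := minLevel_le_and_le_maxLevel hy
      simp only [id]
      omega)
    ⟨_, maxLevel_mem, _, minLevel_mem, hlt.ne', rfl⟩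

theorem clampChain_zero : clampChain s ζ 0 = 0 := by
  funext t
  simp [clampChain, jumpSeq]

theorem clampChain_of_le {k : ℕ} (hk : maxLevel s ζ - minLevel s ζ ≤ k) :
    clampChain s ζ k = jumpSeq s ζ id := by
  funext t
  have := minLevel_le_and_le_maxLevel (partialSum_mem_levels (s := s) (ζ := ζ) t)
  have := minLevel_le_and_le_maxLevel (partialSumLT_mem_levels (s := s) (ζ := ζ) t)
  simp only [clampChain, jumpSeq, id]
  congr 2 <;> omega

theorem discNorm_clampChain_sub {T : ℝ} (hs : ∀ t ∈ s, t ∈ Icc 0 T) {k : ℕ} (hk : 1 ≤ k)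
    (hkr : k ≤ maxLevel s ζ - minLevel s ζ) :
    discNorm T (clampChain s ζ k - clampChain s ζ (k - 1)) = 1 := by
  rw [clampChain, clampChain, ← jumpSeq_sub, discNorm_jumpSeq hs _ 1, Int.cast_one]
  · intro x hx y hy
    have := minLevel_le_and_le_maxLevel hx
    have := minLevel_le_and_le_maxLevel hy
    simp only [Pi.sub_apply, Nat.cast_sub hk, Nat.cast_one]
    omega
  · refine ⟨_, maxLevel_mem, _, minLevel_mem, by omega, ?_⟩
    simp only [Pi.sub_apply, Nat.cast_sub hk, Nat.cast_one]
    omega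

theorem isEventSeq_clampChain {T : ℝ} (hs : ∀ t ∈ s, t ∈ Icc 0 T) (k : ℕ) :
    IsEventSeq T (clampChain s ζ k) :=
  ⟨s.finite_toSet.subset (support_jumpSeq_subset _),
    fun t ht => hs t (support_jumpSeq_subset _ ht)⟩

theorem isPM_clampChain (hζ : ∀ t, |ζ t| ≤ 1) (k : ℕ) : IsPM (clampChain s ζ k) :=
  isPM_jumpSeq hζ fun x y hxy => by
    rw [abs_le] at hxy ⊢
    constructor <;> omega

end EventSeq

theorem IsPM.exists_int {η : ℝ → ℝ} (h : IsPM η) :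
    ∃ ζ : ℝ → ℤ, η = (fun t => (ζ t : ℝ)) ∧ ∀ t, |ζ t| ≤ 1 := by
  have hval : ∀ t, ∃ z : ℤ, η t = z ∧ |z| ≤ 1 := fun t => by
    by_cases ht : η t = 0
    · exact ⟨0, by simp [ht]⟩
    · rcases h t ht with h | h
      exacts [⟨1, by simp [h]⟩, ⟨-1, by simp [h]⟩]
  choose ζ hζ using hval
  exact ⟨ζ, funext fun t => (hζ t).1, fun t => (hζ t).2⟩

open EventSeq in
theorem stmt3_general (T : ℝ) (η : ℝ → ℝ)
    (hη : IsEventSeq T η) (hpm : IsPM η) (hne : η ≠ 0) :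
    ∃ r : ℕ, 0 < r ∧ discNorm T η = (r : ℝ) ∧
      ∃ c : ℕ → (ℝ → ℝ), c 0 = 0 ∧ c r = η ∧
        (∀ k ≤ r, IsEventSeq T (c k) ∧ IsPM (c k)) ∧
        (∀ k, 1 ≤ k → k ≤ r → discNorm T (c k - c (k - 1)) = 1) ∧
        discNorm T η = ∑ k ∈ Finset.Icc 1 r, discNorm T (c k - c (k - 1)) := by
  obtain ⟨ζ, rfl, hζ⟩ := hpm.exists_int
  set s := hη.1.toFinset
  have hs : ∀ t ∈ s, t ∈ Icc 0 T := fun t ht => hη.2 (hη.1.mem_toFinset.mp ht)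
  have hζs : ∀ t ∉ s, ζ t = 0 := fun t ht => by simpa [s] using ht
  obtain ⟨t, ht⟩ := Function.ne_iff.mp hne
  have hlt : minLevel s ζ < maxLevel s ζ :=
    minLevel_lt_maxLevel (by simpa [s] using ht) (by simpa using ht)
  obtain ⟨r, hr⟩ : ∃ r : ℕ, (r : ℤ) = maxLevel s ζ - minLevel s ζ :=
    ⟨_, Int.toNat_of_nonneg (by omega)⟩
  have hdisc : discNorm T (fun t => (ζ t : ℝ)) = r := by
    rw [← jumpSeq_id hζs, discNorm_jumpSeq_id hs hlt, ← hr, Int.cast_natCast]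
  have hstep : ∀ k, 1 ≤ k → k ≤ r →
      discNorm T (clampChain s ζ k - clampChain s ζ (k - 1)) = 1 :=
    fun k hk hkr => discNorm_clampChain_sub hs hk (by omega)
  refine ⟨r, by omega, hdisc, clampChain s ζ, clampChain_zero, ?_,
    fun k _ => ⟨isEventSeq_clampChain hs k, isPM_clampChain hζ k⟩, hstep, ?_⟩
  · rw [clampChain_of_le hr.ge, jumpSeq_id hζs]
  · rw [Finset.sum_congr rfl fun k hk => hstep k (Finset.mem_Icc.mp hk).1 (Finset.mem_Icc.mp hk).2]
    simp [hdisc]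

/-- chain decomposition: for a nonzero ±1-valued event sequence `η`,
`r = ‖η‖_D` is a positive integer, and there is a chain `η_0 = 0, …, η_r = η` of ±1-valued
event sequences with `‖η_k − η_{k−1}‖_D = 1`, so `‖η‖_D = Σ_{k=1}^r ‖η_k − η_{k−1}‖_D`. -/
theorem stmt3 (T : ℝ) (hT : 0 < T) (η : ℝ → ℝ)
    (hη : IsEventSeq T η) (hpm : IsPM η) (hne : η ≠ 0) :
    ∃ r : ℕ, 0 < r ∧ discNorm T η = (r : ℝ) ∧
      ∃ c : ℕ → (ℝ → ℝ), c 0 = 0 ∧ c r = η ∧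
        (∀ k ≤ r, IsEventSeq T (c k) ∧ IsPM (c k)) ∧
        (∀ k, 1 ≤ k → k ≤ r → discNorm T (c k - c (k - 1)) = 1) ∧
        discNorm T η = ∑ k ∈ Finset.Icc 1 r, discNorm T (c k - c (k - 1)) :=
  stmt3_general T η hη hpm hne
end

section
/- Let ‖·‖ be a seminorm on the real vector space of finitely supported functions [0,T] → ℝ and suppose A := sup{‖ζ‖ : ζ a ±1-valued event sequence on [0,T] with ‖ζ‖_D = 1} is finite. Then every ±1-valued event sequence η on [0,T] satisfies ‖η‖ ≤ A·‖η‖_D. -/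
open Set Function Filter Classical

/-!
Let `F(t) = ∑_{u ≤ t} η u` be the running sum of `η`. Each event moves `F` by one unit, from
`F(t⁻)` to `F(t)`; grouping the events by the unit step `[i - 1, i]` they traverse splits `η` into
layers `levelPart η i`. Within a layer the crossings of one level alternate in direction: every
interval sum of the layer telescopes to a difference of two indicators, so a nonzero layer has
discrepancy norm `1`. Running sums are sums over lower sets, and the difference of two of them is
a sum over an order-connected set, hence at most `‖η‖_D`; so at most `‖η‖_D` layers are nonzero,
and subadditivity of the seminorm gives `‖η‖ ≤ A ‖η‖_D`.
-/

theorem Finset.sum_sub_comp_sum_filter_lt {α β γ : Type*} [LinearOrder α] [AddCommMonoid β]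
    [AddCommGroup γ] (s : Finset α) (f : α → β) (φ : β → γ) :
    ∑ t ∈ s, (φ (∑ u ∈ s with u ≤ t, f u) - φ (∑ u ∈ s with u < t, f u)) =
      φ (∑ u ∈ s, f u) - φ 0 := by
  induction s using Finset.induction_on_max with
  | empty => simp
  | insert a s hlt ih =>
    have ha : a ∉ s := fun h => lt_irrefl a (hlt a h)
    have h_le_a : {u ∈ insert a s | u ≤ a} = insert a s :=
      Finset.filter_true_of_mem fun u hu => by
        rcases Finset.mem_insert.mp hu with rfl | hu
        exacts [le_rfl, (hlt u hu).le]
    have h_lt_a : {u ∈ insert a s | u < a} = s := by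
      rw [Finset.filter_insert, if_neg (lt_irrefl a), Finset.filter_true_of_mem hlt]
    have h_below : ∑ t ∈ s, (φ (∑ u ∈ insert a s with u ≤ t, f u) -
        φ (∑ u ∈ insert a s with u < t, f u)) = φ (∑ u ∈ s, f u) - φ 0 := by
      rw [← ih]
      refine Finset.sum_congr rfl fun t ht => ?_
      rw [Finset.filter_insert, if_neg (not_le.mpr (hlt t ht)), Finset.filter_insert,
        if_neg (not_lt.mpr (hlt t ht).le)]
    rw [Finset.sum_insert ha, h_le_a, h_lt_a, h_below, Finset.sum_insert ha]
    abel

section EventSequence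

variable {T : ℝ} {η : ℝ → ℝ}

theorem finsum_mem_Iic_eq_add_finsum_mem_Iio (hη : (support η).Finite) (t : ℝ) :
    ∑ᶠ u ∈ Iic t, η u = η t + ∑ᶠ u ∈ Iio t, η u := by
  rw [← Iio_insert, finsum_mem_insert' η self_notMem_Iio (hη.inter_of_right _)]

theorem exists_int_finsum_mem_eq (hη : IsPM η) (J : Set ℝ) : ∃ k : ℤ, ∑ᶠ u ∈ J, η u = k := by
  refine finsum_mem_induction (f := η) (s := J) (fun x => ∃ k : ℤ, x = k) ⟨0, by simp⟩
    (fun x y ⟨k, hk⟩ ⟨l, hl⟩ => ⟨k + l, by push_cast; rw [hk, hl]⟩) fun t _ => ?_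
  by_cases ht : η t = 0
  · exact ⟨0, by simp [ht]⟩
  · rcases hη t ht with h | h
    exacts [⟨1, by simp [h]⟩, ⟨-1, by simp [h]⟩]

theorem support_sub_comp_finsum_mem_subset (hη : (support η).Finite) (φ : ℝ → ℝ) :
    support (fun t => φ (∑ᶠ u ∈ Iic t, η u) - φ (∑ᶠ u ∈ Iio t, η u)) ⊆ support η :=
  support_subset_iff'.mpr fun t ht => by
    rw [finsum_mem_Iic_eq_add_finsum_mem_Iio hη, notMem_support.mp ht, zero_add, sub_self]

theorem finsum_mem_sub_comp_of_isLowerSet (hη : (support η).Finite) (φ : ℝ → ℝ) {J : Set ℝ}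
    (hJ : IsLowerSet J) :
    ∑ᶠ t ∈ J, (φ (∑ᶠ u ∈ Iic t, η u) - φ (∑ᶠ u ∈ Iio t, η u)) = φ (∑ᶠ u ∈ J, η u) - φ 0 := by
  set s := {u ∈ hη.toFinset | u ∈ J}
  have h_sum : ∀ K ⊆ J, ∀ f : ℝ → ℝ, support f ⊆ support η →
      ∑ᶠ u ∈ K, f u = ∑ u ∈ s with u ∈ K, f u := fun K hK f hf =>
    finsum_mem_eq_sum_of_inter_support_eq f <| by
      ext u
      simp only [s, Finset.filter_filter, Finset.coe_filter, Set.Finite.mem_toFinset,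
        mem_inter_iff, mem_ofPred_eq]
      exact ⟨fun ⟨hu, hfu⟩ => ⟨⟨hf hfu, hK hu, hu⟩, hfu⟩, fun ⟨⟨_, _, hu⟩, hfu⟩ => ⟨hu, hfu⟩⟩
  rw [h_sum J subset_rfl _ (support_sub_comp_finsum_mem_subset hη φ),
    h_sum J subset_rfl η subset_rfl,
    Finset.filter_true_of_mem fun u hu => (Finset.mem_filter.mp hu).2, ← Finset.sum_sub_comp_sum_filter_lt s η φ]
  refine Finset.sum_congr rfl fun t ht => ?_
  have h_Iic : Iic t ⊆ J := hJ.Iic_subset (Finset.mem_filter.mp ht).2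
  rw [h_sum _ h_Iic η subset_rfl, h_sum _ (Iio_subset_Iic_self.trans h_Iic) η subset_rfl]
  simp only [mem_Iic, mem_Iio]

theorem discNorm_nonneg : 0 ≤ discNorm T η :=
  Real.sSup_nonneg fun _ ⟨_, _, _, _, _, hx⟩ => hx ▸ abs_nonneg _

theorem abs_finsum_mem_le_sum_abs (hη : (support η).Finite) (I : Set ℝ) :
    |∑ᶠ t ∈ I, η t| ≤ ∑ t ∈ hη.toFinset, |η t| := by
  rw [← finsum_mem_inter_support, finsum_mem_eq_finite_toFinset_sum η (hη.inter_of_right I)]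
  refine (Finset.abs_sum_le_sum_abs _ _).trans <|
    Finset.sum_le_sum_of_subset_of_nonneg (fun t ht => ?_) fun _ _ _ => abs_nonneg _
  simp only [Set.Finite.mem_toFinset] at ht ⊢
  exact ht.2

theorem abs_finsum_mem_Icc_le_discNorm (hη : (support η).Finite) {a b : ℝ} (ha : 0 ≤ a)
    (hab : a ≤ b) (hb : b ≤ T) : |∑ᶠ t ∈ Icc a b, η t| ≤ discNorm T η :=
  le_csSup ⟨_, fun _ ⟨_, _, _, _, _, hx⟩ => hx ▸ abs_finsum_mem_le_sum_abs hη _⟩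
    ⟨a, b, ha, hab, hb, rfl⟩

/-- Only the events inside an order-connected set matter, and they span a closed interval. -/
theorem abs_finsum_mem_le_discNorm_of_ordConnected (hη : IsEventSeq T η) {I : Set ℝ}
    (hI : I.OrdConnected) : |∑ᶠ t ∈ I, η t| ≤ discNorm T η := by
  have hP : (I ∩ support η).Finite := hη.1.inter_of_right I
  rcases (I ∩ support η).eq_empty_or_nonempty with hP0 | hPne
  · rw [← finsum_mem_inter_support, hP0, finsum_mem_empty, abs_zero]
    exact discNorm_nonneg
  obtain ⟨a, ⟨haI, ha⟩, ha_min⟩ := Set.exists_min_image _ id hP hPne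
  obtain ⟨b, ⟨hbI, hb⟩, hb_max⟩ := Set.exists_max_image _ id hP hPne
  have h_eq : I ∩ support η = Icc a b ∩ support η := by
    ext t
    exact ⟨fun ht => ⟨⟨ha_min t ht, hb_max t ht⟩, ht.2⟩,
      fun ⟨ht, hts⟩ => ⟨hI.out haI hbI ht, hts⟩⟩
  rw [← finsum_mem_inter_support, h_eq, finsum_mem_inter_support]
  exact abs_finsum_mem_Icc_le_discNorm hη.1 (hη.2 ha).1 (ha_min b ⟨hbI, hb⟩) (hη.2 hb).2

theorem abs_finsum_mem_sub_le_discNorm_of_isLowerSet (hη : IsEventSeq T η) {J J' : Set ℝ}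
    (hJ : IsLowerSet J) (hJ' : IsLowerSet J') :
    |∑ᶠ t ∈ J', η t - ∑ᶠ t ∈ J, η t| ≤ discNorm T η := by
  wlog hsub : J ⊆ J' generalizing J J'
  · rw [abs_sub_comm]
    exact this hJ' hJ ((hJ.total hJ').resolve_left hsub)
  rw [← finsum_mem_add_sdiff' hsub (hη.1.inter_of_right _), add_sub_cancel_left, sdiff_eq]
  exact abs_finsum_mem_le_discNorm_of_ordConnected hη
    (hJ'.ordConnected.inter hJ.compl.ordConnected)

theorem discNorm_eq_one {ζ : ℝ → ℝ} (hζ : IsEventSeq T ζ) (hpm : IsPM ζ) (hne : ζ ≠ 0)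
    (hle : ∀ a b, a ≤ b → |∑ᶠ t ∈ Icc a b, ζ t| ≤ 1) : discNorm T ζ = 1 := by
  obtain ⟨t, ht⟩ := Function.ne_iff.mp hne
  have htT := hζ.2 ht
  refine le_antisymm
    (Real.sSup_le (fun _ ⟨a, b, _, hab, _, hx⟩ => hx ▸ hle a b hab) zero_le_one) ?_
  calc 1 = |∑ᶠ u ∈ Icc t t, ζ u| := by
        rw [Icc_self, finsum_mem_singleton]
        rcases hpm t ht with h | h <;> simp [h]
    _ ≤ discNorm T ζ := abs_finsum_mem_Icc_le_discNorm hζ.1 htT.1 le_rfl htT.2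

/-- The `i`-th layer of `η`: the events at which the running sum of `η` crosses between the
levels `i - 1` and `i`, with sign `+1` when crossing upwards and `-1` when crossing downwards. -/
noncomputable def levelPart (η : ℝ → ℝ) (i : ℤ) (t : ℝ) : ℝ :=
  (if (i : ℝ) ≤ ∑ᶠ u ∈ Iic t, η u then 1 else 0) - (if (i : ℝ) ≤ ∑ᶠ u ∈ Iio t, η u then 1 else 0)

theorem support_levelPart_subset (hη : (support η).Finite) (i : ℤ) :
    support (levelPart η i) ⊆ support η :=
  support_sub_comp_finsum_mem_subset hη fun x => if (i : ℝ) ≤ x then 1 else 0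

theorem isEventSeq_levelPart (hη : IsEventSeq T η) (i : ℤ) : IsEventSeq T (levelPart η i) :=
  ⟨hη.1.subset (support_levelPart_subset hη.1 i), (support_levelPart_subset hη.1 i).trans hη.2⟩

theorem isPM_levelPart (i : ℤ) : IsPM (levelPart η i) := fun t ht => by
  simp only [levelPart, mem_support] at ht ⊢
  split_ifs at ht ⊢ <;> simp_all

theorem finsum_mem_Icc_levelPart (hη : (support η).Finite) (i : ℤ) {a b : ℝ} (hab : a ≤ b) :
    ∑ᶠ t ∈ Icc a b, levelPart η i t =
      (if (i : ℝ) ≤ ∑ᶠ u ∈ Iic b, η u then 1 else 0) -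
        (if (i : ℝ) ≤ ∑ᶠ u ∈ Iio a, η u then 1 else 0) := by
  set φ : ℝ → ℝ := fun x => if (i : ℝ) ≤ x then 1 else 0
  have h_lower (J : Set ℝ) (hJ : IsLowerSet J) :
      ∑ᶠ t ∈ J, levelPart η i t = φ (∑ᶠ u ∈ J, η u) - φ 0 :=
    finsum_mem_sub_comp_of_isLowerSet hη φ hJ
  have h_Icc : Icc a b = Iic b \ Iio a := by
    ext t
    simp
  have h_fin : (support (levelPart η i)).Finite := hη.subset (support_levelPart_subset hη i)
  calc ∑ᶠ t ∈ Icc a b, levelPart η i t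
      = ∑ᶠ t ∈ Iic b, levelPart η i t - ∑ᶠ t ∈ Iio a, levelPart η i t := by
        rw [h_Icc, ← finsum_mem_add_sdiff' (Iio_subset_Iic_iff.mpr hab) (h_fin.inter_of_right _),
          add_sub_cancel_left]
    _ = _ := by
        rw [h_lower _ (isLowerSet_Iic b), h_lower _ (isLowerSet_Iio a), sub_sub_sub_cancel_right]

theorem discNorm_levelPart (hη : IsEventSeq T η) {i : ℤ} (hne : levelPart η i ≠ 0) :
    discNorm T (levelPart η i) = 1 := by
  refine discNorm_eq_one (isEventSeq_levelPart hη i) (isPM_levelPart i) hne fun a b hab => ?_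
  rw [finsum_mem_Icc_levelPart hη.1 i hab]
  split_ifs <;> norm_num

theorem sum_Ioc_ite_intCast_le {m M k : ℤ} (hm : m ≤ k) (hM : k ≤ M) :
    ∑ i ∈ Finset.Ioc m M, (if ((i : ℤ) : ℝ) ≤ k then (1 : ℝ) else 0) = k - m := by
  rw [Finset.sum_boole]
  have h_filter : {i ∈ Finset.Ioc m M | ((i : ℤ) : ℝ) ≤ k} = Finset.Ioc m k := by
    ext i
    simp only [Finset.mem_filter, Finset.mem_Ioc, Int.cast_le]
    omega
  rw [h_filter, Int.card_Ioc, ← Int.cast_natCast, Int.toNat_of_nonneg (by omega), Int.cast_sub]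

theorem sum_levelPart_eq (hη : (support η).Finite) (hpm : IsPM η) {m M : ℤ}
    (hbound : ∀ t ∈ support η, ∀ J ∈ ({Iic t, Iio t} : Set (Set ℝ)),
      ∑ᶠ u ∈ J, η u ∈ Icc (m : ℝ) M) :
    ∑ i ∈ Finset.Ioc m M, levelPart η i = η := by
  funext t
  rw [Finset.sum_apply]
  by_cases ht : t ∈ support η
  · obtain ⟨k, hk⟩ := exists_int_finsum_mem_eq hpm (Iic t)
    obtain ⟨l, hl⟩ := exists_int_finsum_mem_eq hpm (Iio t)
    have hk_mem := hbound t ht (Iic t) (by simp)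
    have hl_mem := hbound t ht (Iio t) (by simp)
    rw [hk, mem_Icc, Int.cast_le, Int.cast_le] at hk_mem
    rw [hl, mem_Icc, Int.cast_le, Int.cast_le] at hl_mem
    simp only [levelPart, hk, hl]
    rw [Finset.sum_sub_distrib, sum_Ioc_ite_intCast_le hk_mem.1 hk_mem.2,
      sum_Ioc_ite_intCast_le hl_mem.1 hl_mem.2, sub_sub_sub_cancel_right, ← hk, ← hl,
      finsum_mem_Iic_eq_add_finsum_mem_Iio hη, add_sub_cancel_right]
  · rw [notMem_support.mp ht]
    exact Finset.sum_eq_zero fun i _ =>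
      notMem_support.mp fun hi => ht (support_levelPart_subset hη i hi)

theorem exists_eq_sum_levelPart (hη : IsEventSeq T η) (hpm : IsPM η) :
    ∃ m M : ℤ, ∑ i ∈ Finset.Ioc m M, levelPart η i = η ∧
      ((Finset.Ioc m M).card : ℝ) ≤ discNorm T η := by
  set s := hη.1.toFinset
  set V : Finset ℝ := insert 0 (s.image (fun t => ∑ᶠ u ∈ Iic t, η u) ∪
    s.image (fun t => ∑ᶠ u ∈ Iio t, η u))
  have hV : ∀ v ∈ V, ∃ J : Set ℝ, IsLowerSet J ∧ v = ∑ᶠ u ∈ J, η u := by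
    intro v hv
    simp only [V, Finset.mem_insert, Finset.mem_union, Finset.mem_image] at hv
    rcases hv with rfl | ⟨t, _, rfl⟩ | ⟨t, _, rfl⟩
    exacts [⟨∅, isLowerSet_empty, finsum_mem_empty.symm⟩, ⟨_, isLowerSet_Iic t, rfl⟩,
      ⟨_, isLowerSet_Iio t, rfl⟩]
  have hVne : V.Nonempty := Finset.insert_nonempty _ _
  refine ⟨⌈V.min' hVne⌉, ⌊V.max' hVne⌋, sum_levelPart_eq hη.1 hpm fun t ht J hJ => ?_, ?_⟩
  · have hJV : ∑ᶠ u ∈ J, η u ∈ V := by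
      have hts : t ∈ s := hη.1.mem_toFinset.mpr ht
      rcases hJ with rfl | rfl
      · exact Finset.mem_insert_of_mem (Finset.mem_union_left _ (Finset.mem_image_of_mem _ hts))
      · exact Finset.mem_insert_of_mem (Finset.mem_union_right _ (Finset.mem_image_of_mem _ hts))
    obtain ⟨k, hk⟩ := exists_int_finsum_mem_eq hpm J
    rw [hk] at hJV ⊢
    exact ⟨Int.cast_le.mpr (Int.ceil_le.mpr (V.min'_le _ hJV)),
      Int.cast_le.mpr (Int.le_floor.mpr (V.le_max' _ hJV))⟩
  · obtain ⟨J, hJ, hJ_eq⟩ := hV _ (V.min'_mem hVne)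
    obtain ⟨J', hJ', hJ'_eq⟩ := hV _ (V.max'_mem hVne)
    have h_spread : V.max' hVne - V.min' hVne ≤ discNorm T η := by
      rw [hJ_eq, hJ'_eq]
      exact (le_abs_self _).trans (abs_finsum_mem_sub_le_discNorm_of_isLowerSet hη hJ hJ')
    rw [Int.card_Ioc, ← Int.cast_natCast, Int.toNat_eq_max, Int.cast_max, Int.cast_zero,
      Int.cast_sub]
    exact max_le (by linarith [Int.floor_le (V.max' hVne), Int.le_ceil (V.min' hVne)])
      discNorm_nonneg

end EventSequence

theorem stmt4_general (T : ℝ) (p : Seminorm ℝ (ℝ → ℝ)) (S : Set ℝ)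
    (hS : S = {x | ∃ ζ : ℝ → ℝ, IsEventSeq T ζ ∧ IsPM ζ ∧ discNorm T ζ = 1 ∧ x = p ζ})
    (hbdd : BddAbove S) :
    ∀ η : ℝ → ℝ, IsEventSeq T η → IsPM η → p η ≤ sSup S * discNorm T η := by
  intro η hη hpm
  obtain ⟨m, M, h_sum, h_card⟩ := exists_eq_sum_levelPart hη hpm
  have hA_nonneg : 0 ≤ sSup S :=
    Real.sSup_nonneg (hS ▸ fun _ ⟨ζ, _, _, _, hx⟩ => hx ▸ apply_nonneg p ζ)
  have hA : ∀ i, p (levelPart η i) ≤ sSup S := fun i => by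
    by_cases h : levelPart η i = 0
    · rwa [h, map_zero]
    · exact le_csSup hbdd (hS ▸ ⟨_, isEventSeq_levelPart hη i, isPM_levelPart i,
        discNorm_levelPart hη h, rfl⟩)
  calc p η = p (∑ i ∈ Finset.Ioc m M, levelPart η i) := by rw [h_sum]
    _ ≤ ∑ i ∈ Finset.Ioc m M, p (levelPart η i) :=
      Finset.le_sum_of_subadditive p (map_zero p).le (map_add_le_add p) _ _
    _ ≤ ∑ _i ∈ Finset.Ioc m M, sSup S := Finset.sum_le_sum fun i _ => hA i
    _ = (Finset.Ioc m M).card * sSup S := by rw [Finset.sum_const, nsmul_eq_mul]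
    _ ≤ discNorm T η * sSup S := mul_le_mul_of_nonneg_right h_card hA_nonneg
    _ = sSup S * discNorm T η := mul_comm _ _

/-- if `A = sup{‖ζ‖ : ζ ±1-valued event sequence with ‖ζ‖_D = 1}` is finite
(i.e. the set is bounded above), then `‖η‖ ≤ A·‖η‖_D` for every ±1-valued event sequence. -/
theorem stmt4 (T : ℝ) (hT : 0 < T) (p : Seminorm ℝ (ℝ → ℝ)) (S : Set ℝ)
    (hS : S = {x | ∃ ζ : ℝ → ℝ, IsEventSeq T ζ ∧ IsPM ζ ∧ discNorm T ζ = 1 ∧ x = p ζ})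
    (hbdd : BddAbove S) :
    ∀ η : ℝ → ℝ, IsEventSeq T η → IsPM η → p η ≤ sSup S * discNorm T η :=
  stmt4_general T p S hS hbdd
end

section
/- A nonzero ±1-valued event sequence η on [0,T] satisfies ‖η‖_D = 1 if and only if η has alternating signs. -/
open Set Function Filter Classical

/-!
Any window `[a, b]` containing two consecutive support points of equal sign has sum `±2`, so
`‖η‖_D = 1` forces alternation. Conversely, for an alternating sequence the sum over any window
is either `0` or the value at its last support point: adjoining a new last point `a` turns a sum
`0` into `η a`, and a sum equal to the value at the old last point, which is `-η a`, into `0`.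
-/

section LinearOrder

variable {α : Type*} [LinearOrder α]

theorem Finset.sum_eq_zero_or_eq_max_of_alternating (g : α → ℝ) (s : Finset α)
    (halt : ∀ x ∈ s, ∀ y ∈ s, x < y → (∀ z ∈ s, ¬(x < z ∧ z < y)) → g x + g y = 0) :
    ∑ x ∈ s, g x = 0 ∨ ∃ m ∈ s, (∀ x ∈ s, x ≤ m) ∧ ∑ x ∈ s, g x = g m := by
  induction s using Finset.induction_on_max with
  | empty => simp
  | insert a s hlt ih =>
    have ha : a ∉ s := fun h => lt_irrefl a (hlt a h)
    have halt_s : ∀ x ∈ s, ∀ y ∈ s, x < y → (∀ z ∈ s, ¬(x < z ∧ z < y)) → g x + g y = 0 := by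
      intro x hx y hy hxy hbetween
      refine halt x (mem_insert_of_mem hx) y (mem_insert_of_mem hy) hxy ?_
      rintro z hz ⟨hxz, hzy⟩
      rcases Finset.mem_insert.1 hz with rfl | hz
      · exact lt_asymm hzy (hlt y hy)
      · exact hbetween z hz ⟨hxz, hzy⟩
    rw [Finset.sum_insert ha]
    rcases ih halt_s with hsum | ⟨m, hm, hmax, hsum⟩
    · refine Or.inr ⟨a, mem_insert_self a s, ?_, by rw [hsum, add_zero]⟩
      intro x hx
      rcases Finset.mem_insert.1 hx with rfl | hx
      exacts [le_rfl, (hlt x hx).le]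
    · have hma : g m + g a = 0 := by
        refine halt m (mem_insert_of_mem hm) a (mem_insert_self a s) (hlt m hm) ?_
        rintro z hz ⟨hmz, hza⟩
        rcases Finset.mem_insert.1 hz with rfl | hz
        · exact lt_irrefl z hza
        · exact not_lt.2 (hmax z hz) hmz
      left
      linarith

theorem Finset.abs_sum_le_one_of_alternating (g : α → ℝ) (s : Finset α)
    (hg : ∀ x ∈ s, |g x| ≤ 1)
    (halt : ∀ x ∈ s, ∀ y ∈ s, x < y → (∀ z ∈ s, ¬(x < z ∧ z < y)) → g x + g y = 0) :
    |∑ x ∈ s, g x| ≤ 1 := by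
  rcases s.sum_eq_zero_or_eq_max_of_alternating g halt with hsum | ⟨m, hm, -, hsum⟩
  · simp [hsum]
  · exact hsum ▸ hg m hm

theorem finsum_mem_Icc_eq_add_of_consecutive (η : α → ℝ) {s u : α} (hsu : s < u)
    (hcons : ∀ t ∈ support η, ¬(s < t ∧ t < u)) :
    ∑ᶠ t ∈ Icc s u, η t = η s + η u := by
  rw [← finsum_mem_pair hsu.ne]
  refine finsum_mem_inter_support_eq' η _ _ fun t ht => ⟨fun ⟨hst, htu⟩ => ?_, ?_⟩
  · rcases hst.eq_or_lt with rfl | hst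
    · exact Or.inl rfl
    rcases htu.eq_or_lt with rfl | htu
    · exact Or.inr rfl
    exact absurd ⟨hst, htu⟩ (hcons t ht)
  · rintro (rfl | rfl)
    exacts [⟨le_rfl, hsu.le⟩, ⟨hsu.le, le_rfl⟩]

end LinearOrder

theorem add_eq_zero_iff_mul_neg_of_pm_one {a b : ℝ} (ha : a = 1 ∨ a = -1) (hb : b = 1 ∨ b = -1) :
    a + b = 0 ↔ a * b < 0 := by
  rcases ha with rfl | rfl <;> rcases hb with rfl | rfl <;> norm_num

theorem abs_add_le_one_iff_mul_neg_of_pm_one {a b : ℝ} (ha : a = 1 ∨ a = -1)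
    (hb : b = 1 ∨ b = -1) : |a + b| ≤ 1 ↔ a * b < 0 := by
  rcases ha with rfl | rfl <;> rcases hb with rfl | rfl <;> norm_num

theorem Real.sSup_eq_iff_mem_upperBounds {s : Set ℝ} {a : ℝ} (ha : a ∈ s) (ha0 : a ≠ 0) :
    sSup s = a ↔ a ∈ upperBounds s := by
  refine ⟨fun h x hx => ?_, fun h => IsGreatest.csSup_eq ⟨ha, h⟩⟩
  have hbdd : BddAbove s := by
    by_contra hbdd
    exact ha0 (h ▸ Real.sSup_of_not_bddAbove hbdd)
  exact h ▸ le_csSup hbdd hx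

theorem discNorm_eq_one_iff {T : ℝ} {η : ℝ → ℝ} (hsub : support η ⊆ Icc 0 T) (hpm : IsPM η)
    (hne : η ≠ 0) :
    discNorm T η = 1 ↔
      ∀ a b : ℝ, 0 ≤ a → a ≤ b → b ≤ T → |∑ᶠ t ∈ Icc a b, η t| ≤ 1 := by
  obtain ⟨t₀, ht₀⟩ := support_nonempty_iff.2 hne
  have hone : (1 : ℝ) ∈ {x | ∃ a b : ℝ, 0 ≤ a ∧ a ≤ b ∧ b ≤ T ∧ x = |∑ᶠ t ∈ Icc a b, η t|} := by
    refine ⟨t₀, t₀, (hsub ht₀).1, le_rfl, (hsub ht₀).2, ?_⟩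
    rw [Icc_self, finsum_mem_singleton]
    rcases hpm t₀ ht₀ with h | h <;> simp [h]
  rw [discNorm, Real.sSup_eq_iff_mem_upperBounds hone one_ne_zero]
  constructor
  · exact fun h a b ha hab hb => h ⟨a, b, ha, hab, hb, rfl⟩
  · rintro h _ ⟨a, b, ha, hab, hb, rfl⟩
    exact h a b ha hab hb

theorem abs_finsum_mem_Icc_le_one_of_alternating {η : ℝ → ℝ} (hfin : (support η).Finite)
    (hpm : IsPM η) (halt : Alternating η) (a b : ℝ) :
    |∑ᶠ t ∈ Icc a b, η t| ≤ 1 := by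
  have hF : (Icc a b ∩ support η).Finite := hfin.subset inter_subset_right
  rw [finsum_mem_eq_sum η hF]
  refine Finset.abs_sum_le_one_of_alternating η _ (fun x hx => ?_) fun x hx y hy hxy hbetween => ?_
  · rw [Finite.mem_toFinset] at hx
    rcases hpm x hx.2 with h | h <;> simp [h]
  · rw [Finite.mem_toFinset] at hx hy
    rw [add_eq_zero_iff_mul_neg_of_pm_one (hpm x hx.2) (hpm y hy.2)]
    refine halt x y hx.2 hy.2 hxy fun t ht htxy => hbetween t ?_ htxy
    rw [Finite.mem_toFinset]
    exact ⟨⟨hx.1.1.trans htxy.1.le, htxy.2.le.trans hy.1.2⟩, ht⟩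

theorem alternating_of_abs_finsum_mem_Icc_le_one {T : ℝ} {η : ℝ → ℝ}
    (hsub : support η ⊆ Icc 0 T) (hpm : IsPM η)
    (hbound : ∀ a b : ℝ, 0 ≤ a → a ≤ b → b ≤ T → |∑ᶠ t ∈ Icc a b, η t| ≤ 1) :
    Alternating η := by
  intro s u hs hu hsu hcons
  rw [← abs_add_le_one_iff_mul_neg_of_pm_one (hpm s hs) (hpm u hu),
    ← finsum_mem_Icc_eq_add_of_consecutive η hsu hcons]
  exact hbound s u (hsub hs).1 hsu.le (hsub hu).2

theorem stmt11_general (T : ℝ) (η : ℝ → ℝ)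
    (hη : IsEventSeq T η) (hpm : IsPM η) (hne : η ≠ 0) :
    discNorm T η = 1 ↔ Alternating η := by
  obtain ⟨hfin, hsub⟩ := hη
  rw [discNorm_eq_one_iff hsub hpm hne]
  exact ⟨alternating_of_abs_finsum_mem_Icc_le_one hsub hpm,
    fun halt a b _ _ _ => abs_finsum_mem_Icc_le_one_of_alternating hfin hpm halt a b⟩

/-- a nonzero ±1-valued event sequence has discrepancy norm `1` iff its
values alternate in sign. -/
theorem stmt11 (T : ℝ) (hT : 0 < T) (η : ℝ → ℝ)
    (hη : IsEventSeq T η) (hpm : IsPM η) (hne : η ≠ 0) :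
    discNorm T η = 1 ↔ Alternating η :=
  stmt11_general T η hη hpm hne
end

section
/- For n ≥ 1 let η_n be the event sequence on [0,1] with η_n(k/n) = +1 for 1 ≤ k ≤ ⌈n/2⌉, η_n(k/n) = −1 for ⌈n/2⌉ < k ≤ n, and η_n(t) = 0 otherwise. Then ‖η_n‖_M = 1 for all n, while ‖η_n‖_D = ⌈n/2⌉; in particular ‖η_n‖_D → ∞, so the Max-Max-Sum norm ‖·‖_M is not equivalent to the discrepancy norm ‖·‖_D. -/
open Set Function Filter Classical

/-- The Max-Max-Sum norm `‖η‖_M = max{max_{t ∈ supp η} |η t|, |Σ_t η t|}`. -/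
noncomputable def mmsNorm (η : ℝ → ℝ) : ℝ :=
  max (sSup {x | ∃ t ∈ Function.support η, x = |η t|}) |∑ᶠ t : ℝ, η t|

/-- The event sequence `η_n` on `[0,1]` with value `+1` at `k/n` for `1 ≤ k ≤ ⌈n/2⌉`
(note `⌈n/2⌉ = (n+1)/2` in ℕ) and `−1` at `k/n` for `⌈n/2⌉ < k ≤ n`. -/
noncomputable def etaSeq (n : ℕ) : ℝ → ℝ := fun t =>
  if ∃ k : ℕ, 1 ≤ k ∧ k ≤ (n + 1)/2 ∧ t = (k : ℝ)/(n : ℝ) then 1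
  else if ∃ k : ℕ, (n + 1)/2 < k ∧ k ≤ n ∧ t = (k : ℝ)/(n : ℝ) then -1
  else 0


lemma eta_inj {n : ℕ} (hn : 1 ≤ n) {j k : ℕ} (h : (j : ℝ)/(n : ℝ) = (k : ℝ)/(n : ℝ)) :
    j = k := by
  have hn0 : (n : ℝ) ≠ 0 := by positivity
  field_simp at h
  exact_mod_cast h

lemma eta_val {n : ℕ} (hn : 1 ≤ n) {k : ℕ} (hk1 : 1 ≤ k) (hkn : k ≤ n) :
    etaSeq n ((k : ℝ)/(n : ℝ)) = if k ≤ (n + 1)/2 then 1 else -1 := by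
  unfold etaSeq
  by_cases hk : k ≤ (n + 1)/2
  · rw [if_pos ⟨k, hk1, hk, rfl⟩, if_pos hk]
  · rw [if_neg, if_pos ⟨k, by omega, hkn, rfl⟩, if_neg hk]
    rintro ⟨j, hj1, hjm, hje⟩
    exact hk (eta_inj hn hje ▸ hjm)

lemma eta_ne_zero {n : ℕ} (hn : 1 ≤ n) {t : ℝ} (h : etaSeq n t ≠ 0) :
    ∃ k : ℕ, 1 ≤ k ∧ k ≤ n ∧ t = (k : ℝ)/(n : ℝ) := by
  unfold etaSeq at h
  split_ifs at h with h1 h2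
  · obtain ⟨k, hk1, hkm, ht⟩ := h1
    exact ⟨k, hk1, by omega, ht⟩
  · obtain ⟨k, hkm, hkn, ht⟩ := h2
    exact ⟨k, by omega, hkn, ht⟩
  · exact absurd rfl h

lemma eta_sum {n : ℕ} (hn : 1 ≤ n) (S : Set ℝ)
    [DecidablePred (fun k : ℕ => (k : ℝ)/(n : ℝ) ∈ S)] :
    ∑ᶠ t ∈ S, etaSeq n t
      = ∑ k ∈ (Finset.Icc 1 n).filter (fun k : ℕ => (k : ℝ)/(n : ℝ) ∈ S),
          etaSeq n ((k : ℝ)/(n : ℝ)) := by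
  classical
  set T := (Finset.Icc 1 n).filter (fun k : ℕ => (k : ℝ)/(n : ℝ) ∈ S) with hT
  rw [finsum_mem_eq_sum_of_subset (etaSeq n)
      (t := T.image (fun k : ℕ => (k : ℝ)/(n : ℝ)))]
  · rw [Finset.sum_image]
    intro j hj k hk h
    exact eta_inj hn h
  · rintro x ⟨hxS, hx⟩
    obtain ⟨k, hk1, hkn, rfl⟩ := eta_ne_zero hn hx
    exact Finset.mem_image.2 ⟨k, Finset.mem_filter.2 ⟨Finset.mem_Icc.2 ⟨hk1, hkn⟩, hxS⟩, rfl⟩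
  · intro x hx
    obtain ⟨k, hk, rfl⟩ := Finset.mem_image.1 hx
    exact (Finset.mem_filter.1 hk).2

lemma eta_sum_card {n : ℕ} (hn : 1 ≤ n) (T : Finset ℕ) (hT : T ⊆ Finset.Icc 1 n) :
    ∑ k ∈ T, etaSeq n ((k : ℝ)/(n : ℝ))
      = ((T.filter (fun k => k ≤ (n + 1)/2)).card : ℝ)
        - ((T.filter (fun k => ¬ k ≤ (n + 1)/2)).card : ℝ) := by
  classical
  rw [Finset.sum_congr rfl (fun k hk => by
      have := Finset.mem_Icc.1 (hT hk)
      exact eta_val hn this.1 this.2), Finset.sum_ite]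
  simp [sub_eq_add_neg]

lemma eta_sum_bound {n : ℕ} (hn : 1 ≤ n) (S : Set ℝ) :
    |∑ᶠ t ∈ S, etaSeq n t| ≤ (((n + 1)/2 : ℕ) : ℝ) := by
  classical
  set m := (n + 1)/2 with hm
  set T := (Finset.Icc 1 n).filter (fun k : ℕ => (k : ℝ)/(n : ℝ) ∈ S) with hTdef
  have hT : T ⊆ Finset.Icc 1 n := Finset.filter_subset _ _
  rw [eta_sum hn S, eta_sum_card hn T hT]
  have h1 : (T.filter (fun k => k ≤ m)).card ≤ m := by
    have : T.filter (fun k => k ≤ m) ⊆ Finset.Icc 1 m := by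
      intro k hk
      have h := Finset.mem_filter.1 hk
      have := Finset.mem_Icc.1 (hT h.1)
      exact Finset.mem_Icc.2 ⟨this.1, h.2⟩
    calc _ ≤ (Finset.Icc 1 m).card := Finset.card_le_card this
    _ = m := by rw [Nat.card_Icc]; omega
  have h2 : (T.filter (fun k => ¬ k ≤ m)).card ≤ m := by
    have : T.filter (fun k => ¬ k ≤ m) ⊆ Finset.Icc (m+1) n := by
      intro k hk
      have h := Finset.mem_filter.1 hk
      have := Finset.mem_Icc.1 (hT h.1)
      exact Finset.mem_Icc.2 ⟨by omega, this.2⟩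
    calc _ ≤ (Finset.Icc (m+1) n).card := Finset.card_le_card this
    _ ≤ m := by rw [Nat.card_Icc]; omega
  rw [abs_le]
  constructor
  · have : (0:ℝ) ≤ ((T.filter (fun k => k ≤ m)).card : ℝ) := by positivity
    have h2' : ((T.filter (fun k => ¬ k ≤ m)).card : ℝ) ≤ m := by exact_mod_cast h2
    linarith
  · have : (0:ℝ) ≤ ((T.filter (fun k => ¬ k ≤ m)).card : ℝ) := by positivity
    have h1' : ((T.filter (fun k => k ≤ m)).card : ℝ) ≤ m := by exact_mod_cast h1
    linarith

lemma eta_icc_filter {n : ℕ} (hn : 1 ≤ n) :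
    (Finset.Icc 1 n).filter
        (fun k : ℕ => (k : ℝ)/(n : ℝ) ∈ Set.Icc (0:ℝ) (((((n+1)/2 : ℕ)) : ℝ)/(n : ℝ)))
      = Finset.Icc 1 ((n+1)/2) := by
  classical
  have hn0 : (0:ℝ) < n := by exact_mod_cast hn
  ext k
  simp only [Finset.mem_filter, Finset.mem_Icc, Set.mem_Icc]
  constructor
  · rintro ⟨⟨h1, _⟩, _, h4⟩
    refine ⟨h1, ?_⟩
    exact_mod_cast (div_le_div_iff_of_pos_right hn0).1 h4
  · rintro ⟨h1, h2⟩
    refine ⟨⟨h1, by omega⟩, by positivity, (div_le_div_iff_of_pos_right hn0).2 ?_⟩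
    exact_mod_cast h2

lemma eta_disc_eq {n : ℕ} (hn : 1 ≤ n) :
    discNorm 1 (etaSeq n) = (((n + 1)/2 : ℕ) : ℝ) := by
  classical
  set m := (n + 1)/2 with hm
  have hmn : m ≤ n := by omega
  have hm1 : 1 ≤ m := by omega
  have hn0 : (0:ℝ) < n := by exact_mod_cast hn
  have hub : ∀ x ∈ {x | ∃ a b : ℝ, 0 ≤ a ∧ a ≤ b ∧ b ≤ 1 ∧
      x = |∑ᶠ t ∈ Set.Icc a b, etaSeq n t|}, x ≤ (m : ℝ) := by
    rintro x ⟨a, b, _, _, _, rfl⟩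
    exact eta_sum_bound hn _
  have hmem : (m : ℝ) ∈ {x | ∃ a b : ℝ, 0 ≤ a ∧ a ≤ b ∧ b ≤ 1 ∧
      x = |∑ᶠ t ∈ Set.Icc a b, etaSeq n t|} := by
    refine ⟨0, (m : ℝ)/(n : ℝ), le_refl 0, by positivity, ?_, ?_⟩
    · rw [div_le_one hn0]; exact_mod_cast hmn
    · rw [hm, eta_sum hn]
      rw [eta_icc_filter hn]
      rw [Finset.sum_congr rfl (fun k hk => ?_)]
      · rw [Finset.sum_const, Nat.card_Icc]
        have h9 : (n+1)/2 + 1 - 1 = (n+1)/2 := by omega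
        rw [h9, nsmul_eq_mul, mul_one, abs_of_nonneg (by positivity)]
      · have hk' := Finset.mem_Icc.1 hk
        rw [eta_val hn hk'.1 (by omega), if_pos hk'.2]
  unfold discNorm
  refine le_antisymm (Real.sSup_le hub (by positivity)) (le_csSup ⟨(m:ℝ), hub⟩ hmem)

lemma eta_total {n : ℕ} (hn : 1 ≤ n) : |∑ᶠ t : ℝ, etaSeq n t| ≤ 1 := by
  classical
  set m := (n + 1)/2 with hm
  rw [← finsum_mem_univ, eta_sum hn]
  simp only [Set.mem_univ, Finset.filter_true]
  rw [eta_sum_card hn _ (subset_refl _)]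
  have h1 : (Finset.Icc 1 n).filter (fun k => k ≤ m) = Finset.Icc 1 m := by
    ext k; simp only [Finset.mem_filter, Finset.mem_Icc]; omega
  have h2 : (Finset.Icc 1 n).filter (fun k => ¬ k ≤ m) = Finset.Icc (m+1) n := by
    ext k; simp only [Finset.mem_filter, Finset.mem_Icc]; omega
  rw [h1, h2, Nat.card_Icc, Nat.card_Icc]
  have e1 : m + 1 - 1 = m := by omega
  have e2 : n + 1 - (m + 1) = n - m := by omega
  rw [e1, e2]
  have hc1 : ((n - m : ℕ) : ℝ) = (n : ℝ) - (m : ℝ) := by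
    push_cast [Nat.cast_sub (show m ≤ n by omega)]; ring
  rw [hc1, abs_le]
  have hl : (n : ℝ) ≤ 2 * (m : ℝ) := by exact_mod_cast (show n ≤ 2 * m by omega)
  have hr : 2 * (m : ℝ) ≤ (n : ℝ) + 1 := by exact_mod_cast (show 2 * m ≤ n + 1 by omega)
  constructor <;> linarith

lemma eta_mms_eq {n : ℕ} (hn : 1 ≤ n) : mmsNorm (etaSeq n) = 1 := by
  classical
  have hn0 : (0:ℝ) < n := by exact_mod_cast hn
  have hset : {x | ∃ t ∈ Function.support (etaSeq n), x = |etaSeq n t|} = {1} := by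
    ext x
    simp only [Set.mem_setOf_eq, Set.mem_singleton_iff]
    constructor
    · rintro ⟨t, ht, rfl⟩
      have ht' : etaSeq n t ≠ 0 := ht
      obtain ⟨k, hk1, hkn, rfl⟩ := eta_ne_zero hn ht'
      rw [eta_val hn hk1 hkn]
      split_ifs <;> norm_num
    · rintro rfl
      refine ⟨(1 : ℝ)/(n : ℝ), ?_, ?_⟩
      · have : etaSeq n (((1:ℕ) : ℝ)/(n : ℝ)) = 1 := by
          rw [eta_val hn le_rfl hn, if_pos (by omega)]
        simp only [Function.mem_support]
        push_cast at this
        rw [this]; norm_num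
      · have : etaSeq n (((1:ℕ) : ℝ)/(n : ℝ)) = 1 := by
          rw [eta_val hn le_rfl hn, if_pos (by omega)]
        push_cast at this
        rw [this]; norm_num
  unfold mmsNorm
  rw [hset, csSup_singleton]
  exact max_eq_left (eta_total hn)

lemma eta_event {n : ℕ} (hn : 1 ≤ n) : IsEventSeq 1 (etaSeq n) := by
  have hn0 : (0:ℝ) < n := by exact_mod_cast hn
  constructor
  · apply Set.Finite.subset
      (Set.Finite.image (fun k : ℕ => (k : ℝ)/(n : ℝ)) (Set.finite_Icc 1 n))
    intro t ht
    obtain ⟨k, hk1, hkn, rfl⟩ := eta_ne_zero hn ht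
    exact ⟨k, Set.mem_Icc.2 ⟨hk1, hkn⟩, rfl⟩
  · intro t ht
    obtain ⟨k, hk1, hkn, rfl⟩ := eta_ne_zero hn ht
    refine Set.mem_Icc.2 ⟨by positivity, ?_⟩
    rw [div_le_one hn0]
    exact_mod_cast hkn

/-- `‖η_n‖_M = 1` while `‖η_n‖_D = ⌈n/2⌉ → ∞`; hence `‖·‖_M` is not
equivalent to `‖·‖_D` on event sequences on `[0,1]`. -/
theorem stmt12 :
    (∀ n : ℕ, 1 ≤ n → mmsNorm (etaSeq n) = 1) ∧
    (∀ n : ℕ, 1 ≤ n → discNorm 1 (etaSeq n) = (((n + 1)/2 : ℕ) : ℝ)) ∧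
    Tendsto (fun n : ℕ => discNorm 1 (etaSeq n)) atTop atTop ∧
    ¬ ∃ A₁ A₂ : ℝ, 0 < A₁ ∧ 0 < A₂ ∧ ∀ η : ℝ → ℝ, IsEventSeq 1 η →
        A₁ * discNorm 1 η ≤ mmsNorm η ∧ mmsNorm η ≤ A₂ * discNorm 1 η := by
  refine ⟨fun n hn => eta_mms_eq hn, fun n hn => eta_disc_eq hn, ?_, ?_⟩
  · apply Tendsto.congr' (f₁ := fun n : ℕ => (((n + 1)/2 : ℕ) : ℝ))
    · filter_upwards [eventually_ge_atTop 1] with n hn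
      exact (eta_disc_eq hn).symm
    · apply tendsto_natCast_atTop_atTop.comp
      apply Filter.tendsto_atTop_atTop.mpr
      intro b
      exact ⟨2 * b, fun n hn => by omega⟩
  · rintro ⟨A₁, A₂, hA₁, hA₂, h⟩
    obtain ⟨N, hN⟩ := exists_nat_gt (1/A₁)
    set n := 2 * N + 2 with hn
    have hn1 : 1 ≤ n := by omega
    have hmain := (h (etaSeq n) (eta_event hn1)).1
    rw [eta_disc_eq hn1, eta_mms_eq hn1] 
at hmain
    have hmN : (n + 1)/2 = N + 1 := by omega
    rw [hmN] at hmain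
    have h1 : ((N : ℝ) + 1) ≤ 1/A₁ := by
      rw [le_div_iff₀ hA₁]
      push_cast at hmain
      linarith
    linarith
end

section
/- Let θ > 0, α ≥ 0, let 0 ≤ t_1 < t_2 < … < t_n ≤ T, and let v_1, …, v_n ∈ {−θ, +θ} alternate in sign. Define the van Rossum smoothing R(t) = Σ_{k=1}^{n} v_k · e^{−α(t − t_k)} · 1_{[t_k, ∞)}(t). Then |R(t)| ≤ θ for every t ∈ ℝ. -/
open Set Function Filter Classical

/-- Key lemma: for an alternating-sign sequence with nondecreasing magnitudes,
the partial sum is trapped between `0` and the last term (in sign of the last term). -/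
lemma alt_sum_aux (θ : ℝ) (hθ : 0 < θ) (ε a : ℕ → ℝ) (m : ℕ) (hm : 1 ≤ m) :
    (∀ k < m, ε k = θ ∨ ε k = -θ) →
    (∀ k, k + 1 < m → ε k * ε (k + 1) < 0) →
    (∀ k < m, 0 ≤ a k) →
    (∀ k, k + 1 < m → a k ≤ a (k + 1)) →
    0 ≤ ε (m - 1) * ∑ k ∈ Finset.range m, ε k * a k ∧
      ε (m - 1) * ∑ k ∈ Finset.range m, ε k * a k ≤ θ ^ 2 * a (m - 1) := by
  induction m, hm using Nat.le_induction with
  | base =>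
    intro hε _ ha _
    simp only [Finset.sum_range_one, Nat.sub_self]
    have h' := ha 0 one_pos
    rcases hε 0 one_pos with h | h <;> rw [h] <;> constructor <;>
      nlinarith [mul_nonneg (mul_nonneg hθ.le hθ.le) h']
  | succ m hm ih =>
    intro hε halt ha hmono
    have hm1 : m - 1 + 1 = m := Nat.sub_add_cancel hm
    obtain ⟨ih1, ih2⟩ := ih (fun k hk => hε k (by omega))
      (fun k hk => halt k (by omega)) (fun k hk => ha k (by omega))
      (fun k hk => hmono k (by omega))
    have hS : ∑ k ∈ Finset.range (m + 1), ε k * a k =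
        (∑ k ∈ Finset.range m, ε k * a k) + ε m * a m := Finset.sum_range_succ _ _
    have hsucc : m + 1 - 1 = m := rfl
    rw [hsucc, hS]
    have hεm : ε m = θ ∨ ε m = -θ := hε m (by omega)
    have hεm1 : ε (m - 1) = θ ∨ ε (m - 1) = -θ := hε (m - 1) (by omega)
    have hprod : ε (m - 1) * ε m < 0 := by
      have := halt (m - 1) (by omega)
      rwa [hm1] at this
    have hflip : ε m = -ε (m - 1) := by
      rcases hεm with h1 | h1 <;> rcases hεm1 with h2 | h2 <;>
        rw [h1, h2] at hprod ⊢
      · exact absurd hprod (by nlinarith [mul_pos hθ hθ])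
      · ring
      · exact absurd hprod (by nlinarith [mul_pos hθ hθ])
    have hamono : a (m - 1) ≤ a m := by
      have := hmono (m - 1) (by omega)
      rwa [hm1] at this
    have hεsq : ε m * ε m = θ ^ 2 := by
      rcases hεm with h1 | h1 <;> rw [h1] <;> ring
    have ham : 0 ≤ a m := ha m (by omega)
    have hεsq' : ε (m - 1) * ε (m - 1) = θ ^ 2 := by
      rcases hεm1 with h1 | h1 <;> rw [h1] <;> ring
    have hkey : ε m * ((∑ k ∈ Finset.range m, ε k * a k) + ε m * a m) =
        -(ε (m - 1) * ∑ k ∈ Finset.range m, ε k * a k) + θ ^ 2 * a m := by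
      rw [hflip]; linear_combination a m * hεsq'
    have hmm : θ ^ 2 * a (m - 1) ≤ θ ^ 2 * a m :=
      mul_le_mul_of_nonneg_left hamono (sq_nonneg θ)
    constructor <;> rw [hkey] <;> linarith

/-- for events `v_k ∈ {−θ,+θ}` of alternating signs at times
`0 ≤ t_1 < … < t_n ≤ T`, the van Rossum smoothing
`R(s) = Σ_k v_k e^{−α(s−t_k)} 1_{[t_k,∞)}(s)` satisfies `|R(s)| ≤ θ` for all `s ∈ ℝ`. -/
theorem stmt13 (T θ α : ℝ) (hT : 0 < T) (hθ : 0 < θ) (hα : 0 ≤ α)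
    (n : ℕ) (t : Fin n → ℝ) (ht : StrictMono t)
    (h0 : ∀ k, 0 ≤ t k) (hTk : ∀ k, t k ≤ T)
    (v : Fin n → ℝ) (hv : ∀ k, v k = θ ∨ v k = -θ)
    (halt : ∀ (k : ℕ) (h1 : k + 1 < n),
      v ⟨k, Nat.lt_of_succ_lt h1⟩ * v ⟨k + 1, h1⟩ < 0) :
    ∀ s : ℝ,
      |∑ k : Fin n, (if t k ≤ s then v k * Real.exp (-(α * (s - t k))) else 0)| ≤ θ := by
  intro s
  classical
  by_cases hex : ∃ k : Fin n, t k ≤ s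
  swap
  · push_neg at hex
    have : ∀ k : Fin n, ¬ t k ≤ s := fun k => not_le.mpr (hex k)
    rw [Finset.sum_eq_zero (fun k _ => if_neg (this k))]
    simpa using hθ.le
  -- find m = least index with s < t k (or n if none), initial segment
  obtain ⟨m, hm1, hmn, key⟩ : ∃ m : ℕ, 1 ≤ m ∧ m ≤ n ∧
      ∀ k : Fin n, (t k ≤ s ↔ (k : ℕ) < m) := by
    by_cases hQ : ∃ k : ℕ, ∃ h : k < n, s < t ⟨k, h⟩
    · set m := Nat.find hQ with hm
      obtain ⟨hmlt, hms⟩ := Nat.find_spec hQ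
      have key : ∀ k : Fin n, (t k ≤ s ↔ (k : ℕ) < m) := by
        intro k
        constructor
        · intro hk
          by_contra hge
          push_neg at hge
          have : t ⟨m, hmlt⟩ ≤ t k := ht.monotone (by simpa [Fin.le_def] using hge)
          linarith
        · intro hk
          have := Nat.find_min hQ hk
          push_neg at this
          have := this k.2
          simpa using this
      obtain ⟨k0, hk0⟩ := hex
      refine ⟨m, ?_, hmlt.le, key⟩
      have := (key k0).mp hk0
      omega
    · push_neg at hQ
      obtain ⟨k0, _⟩ := hex
      refine ⟨n, k0.pos, le_refl n, fun k => ?_⟩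
      have := hQ k k.2
      simp only [Fin.eta, not_lt] at this
      exact ⟨fun _ => k.2, fun _ => this⟩
  -- set up ℕ-indexed sequences
  set ε : ℕ → ℝ := fun k => if h : k < n then v ⟨k, h⟩ else θ with hε_def
  set a : ℕ → ℝ := fun k => if h : k < n then Real.exp (-(α * (s - t ⟨k, h⟩))) else 1
    with ha_def
  have hsum : (∑ k : Fin n, (if t k ≤ s then v k * Real.exp (-(α * (s - t k))) else 0)) =
      ∑ k ∈ Finset.range m, ε k * a k := by
    have h1 : (∑ k : Fin n, (if t k ≤ s then v k * Real.exp (-(α * (s - t k))) else 0)) =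
        ∑ k ∈ Finset.range n, (if k < m then ε k * a k else 0) := by
      rw [Finset.sum_range fun k => _]
      refine Finset.sum_congr rfl fun k _ => ?_
      by_cases hk : (k : ℕ) < m
      · rw [if_pos ((key k).mpr hk), if_pos hk]
        simp [hε_def, ha_def, k.2]
      · rw [if_neg (fun h => hk ((key k).mp h)), if_neg hk]
    rw [h1, ← Finset.sum_filter]
    congr 1
    ext k
    simp only [Finset.mem_filter, Finset.mem_range]
    omega
  rw [hsum]
  -- verify hypotheses of alt_sum_aux
  have htk : ∀ k (hk : k < m), t ⟨k, Nat.lt_of_lt_of_le hk hmn⟩ ≤ s := by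
    intro k hk
    exact (key ⟨k, Nat.lt_of_lt_of_le hk hmn⟩).mpr hk
  have hεθ : ∀ k < m, ε k = θ ∨ ε k = -θ := by
    intro k hk
    simp only [hε_def, dif_pos (show k < n by omega)]
    exact hv _
  have haltε : ∀ k, k + 1 < m → ε k * ε (k + 1) < 0 := by
    intro k hk
    have h1 : k + 1 < n := by omega
    simp only [hε_def, dif_pos (show k < n by omega), dif_pos h1]
    exact halt k h1
  have ha0 : ∀ k < m, 0 ≤ a k := by
    intro k hk
    simp only [ha_def, dif_pos (show k < n by omega)]
    exact (Real.exp_pos _).le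
  have hamono : ∀ k, k + 1 < m → a k ≤ a (k + 1) := by
    intro k hk
    have h1 : k + 1 < n := by omega
    have h0 : k < n := by omega
    simp only [ha_def, dif_pos h0, dif_pos h1]
    apply Real.exp_le_exp.mpr
    have : t ⟨k, h0⟩ ≤ t ⟨k + 1, h1⟩ := (ht (by simp [Fin.lt_def])).le
    nlinarith
  obtain ⟨hlo, hhi⟩ := alt_sum_aux θ hθ ε a m hm1 hεθ haltε ha0 hamono
  have haux : a (m - 1) ≤ 1 := by
    have hmn' : m - 1 < n := by omega
    simp only [ha_def, dif_pos hmn']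
    rw [Real.exp_le_one_iff]
    have := htk (m - 1) (by omega)
    nlinarith
  have hεlast : ε (m - 1) = θ ∨ ε (m - 1) = -θ := hεθ (m - 1) (by omega)
  have ha0' : 0 ≤ a (m - 1) := ha0 (m - 1) (by omega)
  rw [abs_le]
  rcases hεlast with h | h <;> rw [h] at hlo hhi <;> constructor <;> nlinarith
end

section
/- Let α > 0 and Δ > 0, let n ∈ ℕ, set t_k = kΔ for k = 0, 1, …, n, and define R(t) = Σ_{k=0}^{n} (−1)^k · e^{−α(t − kΔ)} · 1_{[kΔ, ∞)}(t). Then |R(t)| ≥ e^{−αΔ}(1 − e^{−αΔ}) for every t ∈ [0, nΔ]. -/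
open Set Function Filter Classical

/-! Write `q = e^{-αΔ}` and `m = ⌊s/Δ⌋`. Only the events `k ≤ m` have arrived at time `s`, and
reversing the order of summation gives `R(s) = ± e^{-α(s-mΔ)} Σ_{j ≤ m} (-q)^j`. The prefactor is
at least `q` because `s - mΔ ≤ Δ`, and the partial sums `S_m` of the alternating geometric series
stay in `[1 - q, 1]`, since `S_{m+1} = 1 - q S_m`. -/

open Finset

theorem geom_sum_neg_mem_Icc {R : Type*} [CommRing R] [LinearOrder R] [IsStrictOrderedRing R]
    {q : R} (hq₀ : 0 ≤ q) (hq₁ : q ≤ 1) (m : ℕ) :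
    ∑ i ∈ range (m + 1), (-q) ^ i ∈ Set.Icc (1 - q) 1 := by
  induction m with
  | zero => simpa using hq₀
  | succ m ih =>
    obtain ⟨hlo, hhi⟩ := ih
    rw [geom_sum_succ, neg_mul]
    constructor <;> nlinarith

theorem neg_one_pow_sub_of_le {R : Type*} [Ring R] {j m : ℕ} (h : j ≤ m) :
    (-1 : R) ^ (m - j) = (-1) ^ m * (-1) ^ j := by
  conv_rhs => rw [← Nat.sub_add_cancel h, pow_add, mul_assoc, ← pow_add, ← two_mul, pow_mul]
  simp

theorem sum_range_neg_one_pow_mul_exp (α Δ s : ℝ) (m : ℕ) :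
    ∑ k ∈ range (m + 1), (-1) ^ k * Real.exp (-(α * (s - k * Δ))) =
      (-1) ^ m * Real.exp (-(α * (s - m * Δ))) *
        ∑ j ∈ range (m + 1), (-Real.exp (-(α * Δ))) ^ j := by
  rw [← sum_range_reflect, mul_sum]
  refine sum_congr rfl fun j hj => ?_
  have hjm : j ≤ m := Nat.lt_succ_iff.mp (Finset.mem_range.mp hj)
  rw [add_tsub_cancel_right, neg_one_pow_sub_of_le hjm, Nat.cast_sub hjm, neg_pow (Real.exp _),
    ← Real.exp_nat_mul, mul_mul_mul_comm, mul_assoc, ← Real.exp_add]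
  ring_nf

theorem sum_range_ite_le_eq_sum_range_floor {Δ s : ℝ} (hΔ : 0 < Δ) (hs₀ : 0 ≤ s) {n : ℕ}
    (hs : s ≤ n * Δ) (f : ℕ → ℝ) :
    ∑ k ∈ range (n + 1), (if k * Δ ≤ s then f k else 0) = ∑ k ∈ range (⌊s / Δ⌋₊ + 1), f k := by
  have hle : ∀ k : ℕ, k * Δ ≤ s ↔ k ≤ ⌊s / Δ⌋₊ := fun k => by
    rw [Nat.le_floor_iff (by positivity), le_div_iff₀ hΔ]
  have hfloor : ⌊s / Δ⌋₊ ≤ n := Nat.floor_le_of_le ((div_le_iff₀ hΔ).mpr hs)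
  rw [← sum_filter]
  congr 1
  ext k
  simp only [mem_filter, Finset.mem_range, hle]
  omega

/-- for alternating unit events at the equidistant times `kΔ`, `k = 0,…,n`,
the van Rossum smoothing `R(s) = Σ_{k=0}^n (−1)^k e^{−α(s−kΔ)} 1_{[kΔ,∞)}(s)` satisfies
`|R(s)| ≥ e^{−αΔ}(1 − e^{−αΔ})` on `[0, nΔ]`. -/
theorem stmt14 (α Δ : ℝ) (hα : 0 < α) (hΔ : 0 < Δ) (n : ℕ) :
    ∀ s ∈ Set.Icc (0 : ℝ) ((n : ℝ) * Δ),
      Real.exp (-(α * Δ)) * (1 - Real.exp (-(α * Δ))) ≤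
        |∑ k ∈ Finset.range (n + 1),
          ((-1 : ℝ)^k *
            (if (k : ℝ) * Δ ≤ s then Real.exp (-(α * (s - (k : ℝ) * Δ))) else 0))| := by
  rintro s ⟨hs₀, hs⟩
  set m := ⌊s / Δ⌋₊
  have hsm : s - m * Δ ≤ Δ := by
    have := (div_lt_iff₀ hΔ).mp (Nat.lt_floor_add_one (s / Δ))
    linarith
  have hq : Real.exp (-(α * Δ)) ≤ 1 := Real.exp_le_one_iff.mpr (neg_nonpos.mpr (by positivity))
  have hdecay : Real.exp (-(α * Δ)) ≤ Real.exp (-(α * (s - m * Δ))) :=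
    Real.exp_le_exp.mpr (neg_le_neg (mul_le_mul_of_nonneg_left hsm hα.le))
  have hgeom := (geom_sum_neg_mem_Icc (Real.exp_pos _).le hq m).1
  simp only [mul_ite, mul_zero]
  rw [sum_range_ite_le_eq_sum_range_floor hΔ hs₀ hs, sum_range_neg_one_pow_mul_exp, abs_mul,
    abs_mul, abs_neg_one_pow, one_mul, abs_of_pos (Real.exp_pos _)]
  exact mul_le_mul hdecay (hgeom.trans (le_abs_self _)) (sub_nonneg.mpr hq) (Real.exp_pos _).le
end

section
/- Let T > 0, θ > 0, N ≥ 1, let 0 < t_1 < t_2 < … < t_N ≤ T, and let v_1, …, v_N ∈ {−θ, +θ}. Then there exists f ∈ F[0,T] whose SOD sampling times for threshold θ are exactly t_1, …, t_N and whose SOD output is Φ_θ(f) = Σ_{k=1}^{N} v_k · 1_{{t_k}}. In other words, every finitely supported function taking only the values ±θ on its support, with support contained in (0,T], lies in E_θ[0,T]. -/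
open Set Function Filter Classical

/-! The witness is the piecewise linear function that moves by `v k` on `[t_{k-1}, t_k]`
(with `t_0 = 0`) and is constant after `t_N`. On the `k`-th piece the absolute deviation from
the value at `t_{k-1}` is `θ` times a ramp that stays below `1` until `t_k`, so the next sampling
time is exactly `t_k`; after `t_N` the deviation vanishes and sampling stops. -/

noncomputable def ramp (a b x : ℝ) : ℝ := max 0 (min 1 ((x - a) / (b - a)))

section Ramp

variable {a b x : ℝ}

lemma continuous_ramp (a b : ℝ) : Continuous (ramp a b) := by
  unfold ramp
  fun_prop

lemma ramp_nonneg : 0 ≤ ramp a b x := le_max_left _ _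

lemma ramp_of_le (hab : a < b) (hx : x ≤ a) : ramp a b x = 0 := by
  have : (x - a) / (b - a) ≤ 0 := div_nonpos_of_nonpos_of_nonneg (by linarith) (by linarith)
  simp only [ramp, min_eq_right (this.trans zero_le_one), max_eq_left this]

lemma ramp_of_ge (hab : a < b) (hx : b ≤ x) : ramp a b x = 1 := by
  have : 1 ≤ (x - a) / (b - a) := (one_le_div (by linarith)).2 (by linarith)
  simp only [ramp, min_eq_left this, max_eq_right zero_le_one]

lemma ramp_lt_one (hab : a < b) (hx : x < b) : ramp a b x < 1 :=
  max_lt zero_lt_one (min_lt_of_right_lt ((div_lt_one (by linarith)).2 (by linarith)))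

end Ramp

lemma sodNext_eq_some_of_lt {T θ : ℝ} {f : ℝ → ℝ} {s u : ℝ} (hu : u ∈ Ioc s T)
    (hθu : θ ≤ |f u - f s|) (hlt : ∀ x ∈ Ioo s u, |f x - f s| < θ) :
    sodNext T θ f s = some u := by
  have hleast : IsLeast {t | t ∈ Ioc s T ∧ θ ≤ |f t - f s|} u := by
    refine ⟨⟨hu, hθu⟩, fun x ⟨hx, hθx⟩ => ?_⟩
    by_contra! hxu
    exact (hlt x ⟨hx.1, hxu⟩).not_ge hθx
  rw [sodNext, if_pos ⟨u, hu, hθu⟩, hleast.csInf_eq]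

lemma sodNext_eq_none_of_lt {T θ : ℝ} {f : ℝ → ℝ} {s : ℝ}
    (hlt : ∀ x ∈ Ioc s T, |f x - f s| < θ) : sodNext T θ f s = none := by
  rw [sodNext, if_neg]
  rintro ⟨x, hx, hθx⟩
  exact (hlt x hx).not_ge hθx

section StrictMonoOn

variable {α : Type*} [Preorder α] {τ : ℕ → α} {N : ℕ}

lemma StrictMonoOn.lt_succ_of_lt (hτ : StrictMonoOn τ (Iic N)) {k : ℕ} (hk : k < N) :
    τ k < τ (k + 1) :=
  hτ (mem_Iic.2 hk.le) (mem_Iic.2 hk) k.lt_succ_self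

lemma StrictMonoOn.le_of_le (hτ : StrictMonoOn τ (Iic N)) {j k : ℕ} (hjk : j ≤ k) (hk : k ≤ N) :
    τ j ≤ τ k :=
  hτ.monotoneOn (mem_Iic.2 (hjk.trans hk)) (mem_Iic.2 hk) hjk

end StrictMonoOn

structure IsSodSchedule (T θ : ℝ) (f : ℝ → ℝ) (τ : ℕ → ℝ) (N : ℕ) : Prop where
  zero : τ 0 = 0
  next : ∀ j < N, sodNext T θ f (τ j) = some (τ (j + 1))
  halt : sodNext T θ f (τ N) = none

namespace IsSodSchedule

variable {T θ : ℝ} {f : ℝ → ℝ} {τ : ℕ → ℝ} {N : ℕ}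

lemma sodTime_of_le (h : IsSodSchedule T θ f τ N) {k : ℕ} (hk : k ≤ N) :
    sodTime T θ f k = some (τ k) := by
  induction k with
  | zero => rw [h.zero]; rfl
  | succ k ih => rw [sodTime, ih (by omega), Option.bind_some, h.next k (by omega)]

lemma sodTime_of_lt (h : IsSodSchedule T θ f τ N) {k : ℕ} (hk : N < k) :
    sodTime T θ f k = none := by
  induction k with
  | zero => omega
  | succ k ih =>
    rcases (Nat.lt_succ_iff.1 hk).eq_or_lt with rfl | hNk
    · rw [sodTime, h.sodTime_of_le le_rfl, Option.bind_some, h.halt]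
    · rw [sodTime, ih hNk, Option.bind_none]

lemma sodTime_eq_some_iff (h : IsSodSchedule T θ f τ N) {k : ℕ} {s : ℝ} :
    sodTime T θ f k = some s ↔ k ≤ N ∧ τ k = s := by
  by_cases hk : k ≤ N
  · simp [h.sodTime_of_le hk, hk]
  · simp [h.sodTime_of_lt (not_le.1 hk), hk]

lemma sodTime_sodNext_eq_some_iff (h : IsSodSchedule T θ f τ N) {k : ℕ} {s x : ℝ} :
    (sodTime T θ f k = some s ∧ sodNext T θ f s = some x) ↔
      k < N ∧ τ k = s ∧ τ (k + 1) = x := by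
  rw [h.sodTime_eq_some_iff]
  constructor
  · rintro ⟨⟨hkN, rfl⟩, hx⟩
    rcases hkN.lt_or_eq with hkN | rfl
    · exact ⟨hkN, rfl, Option.some_inj.1 ((h.next k hkN).symm.trans hx)⟩
    · exact absurd (h.halt.symm.trans hx) (by simp)
  · rintro ⟨hkN, rfl, rfl⟩
    exact ⟨⟨hkN.le, rfl⟩, h.next k hkN⟩

lemma sodOut_eq (h : IsSodSchedule T θ f τ N) (hτ : StrictMonoOn τ (Iic N)) :
    sodOut T θ f = fun x => ∑ k ∈ Finset.range N,
      if x = τ (k + 1) then f (τ (k + 1)) - f (τ k) else 0 := by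
  funext x
  rw [sodOut]
  split_ifs with hx
  · obtain ⟨hkN, hs, hkx⟩ := h.sodTime_sodNext_eq_some_iff.1 hx.choose_spec.choose_spec
    rw [← hs, Finset.sum_eq_single_of_mem _ (Finset.mem_range.2 hkN), if_pos hkx.symm, hkx]
    intro j hj hjk
    refine if_neg fun hxj => hjk ?_
    exact Nat.succ_injective <| hτ.injOn (mem_Iic.2 (Finset.mem_range.1 hj)) (mem_Iic.2 hkN)
      (hxj.symm.trans hkx.symm)
  · refine (Finset.sum_eq_zero fun k hk => if_neg ?_).symm
    rintro rfl
    exact hx ⟨k, τ k, h.sodTime_sodNext_eq_some_iff.2 ⟨Finset.mem_range.1 hk, rfl, rfl⟩⟩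

end IsSodSchedule

noncomputable def rampSum (τ w : ℕ → ℝ) (N : ℕ) (x : ℝ) : ℝ :=
  ∑ k ∈ Finset.range N, w k * ramp (τ k) (τ (k + 1)) x

section RampSum

variable {τ w : ℕ → ℝ} {N : ℕ}

lemma continuous_rampSum (τ w : ℕ → ℝ) (N : ℕ) : Continuous (rampSum τ w N) := by
  have := continuous_ramp
  unfold rampSum
  fun_prop

lemma rampSum_of_le (hτ : StrictMonoOn τ (Iic N)) {x : ℝ} (hx : x ≤ τ 0) :
    rampSum τ w N x = 0 := by
  refine Finset.sum_eq_zero fun k hk => ?_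
  have hk := Finset.mem_range.1 hk
  rw [ramp_of_le (hτ.lt_succ_of_lt hk) (hx.trans (hτ.le_of_le k.zero_le hk.le)), mul_zero]

lemma rampSum_of_ge (hτ : StrictMonoOn τ (Iic N)) {x : ℝ} (hx : τ N ≤ x) :
    rampSum τ w N x = ∑ k ∈ Finset.range N, w k := by
  refine Finset.sum_congr rfl fun k hk => ?_
  have hk := Finset.mem_range.1 hk
  rw [ramp_of_ge (hτ.lt_succ_of_lt hk) ((hτ.le_of_le hk le_rfl).trans hx), mul_one]

lemma rampSum_sub_rampSum (hτ : StrictMonoOn τ (Iic N)) {j : ℕ} (hj : j < N) {x : ℝ}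
    (hx : x ∈ Icc (τ j) (τ (j + 1))) :
    rampSum τ w N x - rampSum τ w N (τ j) = w j * ramp (τ j) (τ (j + 1)) x := by
  rw [rampSum, rampSum, ← Finset.sum_sub_distrib,
    Finset.sum_eq_single_of_mem j (Finset.mem_range.2 hj),
    ramp_of_le (hτ.lt_succ_of_lt hj) le_rfl, mul_zero, sub_zero]
  intro k hk hkj
  have hkτ := hτ.lt_succ_of_lt (Finset.mem_range.1 hk)
  rcases hkj.lt_or_gt with hkj | hjk
  · have hτkj : τ (k + 1) ≤ τ j := hτ.le_of_le hkj hj.le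
    rw [ramp_of_ge hkτ (hτkj.trans hx.1), ramp_of_ge hkτ hτkj, sub_self]
  · have hτjk : τ (j + 1) ≤ τ k := hτ.le_of_le hjk (Finset.mem_range.1 hk).le
    rw [ramp_of_le hkτ (hx.2.trans hτjk), ramp_of_le hkτ ((hτ.lt_succ_of_lt hj).le.trans hτjk),
      sub_self]

lemma rampSum_succ_sub_rampSum (hτ : StrictMonoOn τ (Iic N)) {j : ℕ} (hj : j < N) :
    rampSum τ w N (τ (j + 1)) - rampSum τ w N (τ j) = w j := by
  have hlt := hτ.lt_succ_of_lt hj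
  rw [rampSum_sub_rampSum hτ hj ⟨hlt.le, le_rfl⟩, ramp_of_ge hlt le_rfl, mul_one]

variable {T θ : ℝ}

lemma sodNext_rampSum (hτ : StrictMonoOn τ (Iic N)) (hθ : 0 < θ) (hw : ∀ k < N, |w k| = θ)
    (hT : τ N ≤ T) {j : ℕ} (hj : j < N) :
    sodNext T θ (rampSum τ w N) (τ j) = some (τ (j + 1)) := by
  have hlt := hτ.lt_succ_of_lt hj
  refine sodNext_eq_some_of_lt ⟨hlt, (hτ.le_of_le hj le_rfl).trans hT⟩ ?_ fun x hx => ?_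
  · rw [rampSum_succ_sub_rampSum hτ hj, hw j hj]
  · rw [rampSum_sub_rampSum hτ hj (Ioo_subset_Icc_self hx), abs_mul, hw j hj,
      abs_of_nonneg ramp_nonneg]
    exact mul_lt_of_lt_one_right hθ (ramp_lt_one hlt hx.2)

lemma sodNext_rampSum_last (hτ : StrictMonoOn τ (Iic N)) (hθ : 0 < θ) :
    sodNext T θ (rampSum τ w N) (τ N) = none :=
  sodNext_eq_none_of_lt fun x hx => by
    rwa [rampSum_of_ge hτ hx.1.le, rampSum_of_ge hτ le_rfl, sub_self, abs_zero]

lemma isSodSchedule_rampSum (hτ : StrictMonoOn τ (Iic N)) (hτ0 : τ 0 = 0) (hθ : 0 < θ)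
    (hw : ∀ k < N, |w k| = θ) (hT : τ N ≤ T) : IsSodSchedule T θ (rampSum τ w N) τ N :=
  ⟨hτ0, fun _ hj => sodNext_rampSum hτ hθ hw hT hj, sodNext_rampSum_last hτ hθ⟩

end RampSum

theorem stmt15_general (T θ : ℝ) (hθ : 0 < θ) (N : ℕ) (hN : 1 ≤ N)
    (t : ℕ → ℝ) (hmono : ∀ k, 1 ≤ k → k < N → t k < t (k + 1))
    (h0 : 0 < t 1) (hTN : t N ≤ T)
    (v : ℕ → ℝ) (hv : ∀ k, 1 ≤ k → k ≤ N → v k = θ ∨ v k = -θ) :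
    ∃ f : ℝ → ℝ, memF T f ∧
      (∀ k, 1 ≤ k → k ≤ N → sodTime T θ f k = some (t k)) ∧
      sodTime T θ f (N + 1) = none ∧
      sodOut T θ f = fun s => ∑ k ∈ Finset.Icc 1 N, (if s = t k then v k else 0) := by
  set τ : ℕ → ℝ := fun k => if k = 0 then 0 else t k
  have hτt : ∀ k, 1 ≤ k → τ k = t k := fun k hk => if_neg (by omega)
  have hτ : StrictMonoOn τ (Iic N) := strictMonoOn_Iic_of_lt_succ fun k hk => by
    rw [Order.succ_eq_add_one, hτt (k + 1) k.succ_pos]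
    rcases k with _ | k
    · exact h0
    · rw [hτt _ k.succ_pos]
      exact hmono _ k.succ_pos hk
  have hw : ∀ k < N, |v (k + 1)| = θ := fun k hk => by
    rcases hv (k + 1) k.succ_pos hk with h | h <;> simp [h, hθ.le]
  have hsched := isSodSchedule_rampSum (T := T) hτ rfl hθ hw ((hτt N hN).trans_le hTN)
  refine ⟨rampSum τ (fun k => v (k + 1)) N,
    ⟨(continuous_rampSum _ _ _).continuousOn, rampSum_of_le hτ le_rfl⟩,
    fun k hk hkN => by rw [hsched.sodTime_of_le hkN, hτt k hk],
    hsched.sodTime_of_lt N.lt_succ_self, ?_⟩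
  have hreindex (g : ℕ → ℝ) :
      ∑ k ∈ Finset.Icc 1 N, g k = ∑ k ∈ Finset.range N, g (k + 1) := by
    rw [Finset.range_eq_Ico, Finset.sum_Ico_add', zero_add, Finset.Ico_add_one_right_eq_Icc]
  funext s
  rw [hsched.sodOut_eq hτ, hreindex]
  refine Finset.sum_congr rfl fun k hk => ?_
  rw [rampSum_succ_sub_rampSum hτ (Finset.mem_range.1 hk), hτt (k + 1) k.succ_pos]

/-- surjectivity of SOD onto event sequences: for prescribed times
`0 < t_1 < … < t_N ≤ T` and values `v_k ∈ {−θ,+θ}` there is `f ∈ F[0,T]` whose SOD sampling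
times for threshold `θ` are exactly `t_1, …, t_N` and with `Φ_θ(f) = Σ_k v_k 1_{{t_k}}`. -/
theorem stmt15 (T θ : ℝ) (hT : 0 < T) (hθ : 0 < θ) (N : ℕ) (hN : 1 ≤ N)
    (t : ℕ → ℝ) (hmono : ∀ k, 1 ≤ k → k < N → t k < t (k + 1))
    (h0 : 0 < t 1) (hTN : t N ≤ T)
    (v : ℕ → ℝ) (hv : ∀ k, 1 ≤ k → k ≤ N → v k = θ ∨ v k = -θ) :
    ∃ f : ℝ → ℝ, memF T f ∧
      (∀ k, 1 ≤ k → k ≤ N → sodTime T θ f k = some (t k)) ∧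
      sodTime T θ f (N + 1) = none ∧
      sodOut T θ f = fun s => ∑ k ∈ Finset.Icc 1 N, (if s = t k then v k else 0) :=
  stmt15_general T θ hθ N hN t hmono h0 hTN v hv
end
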